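/- arXiv:1801.04717 — 10 statements merged into one kernel-verified Lean document; each statement's English description precedes it below -/
import Mathlib

section
/- The equation (13^n - 1)(76^n - 1) = x^2 has exactly one solution in positive integers n, x, namely n = 1, x = 30. -/
/-!
For `n ≥ 2` the product is excluded as a square by looking at `n mod 8`. When `4 ∣ n`, lifting
the exponent at `5` gives `v₅((13ⁿ - 1)(76ⁿ - 1)) = (1 + v₅ n) + (2 + v₅ n)`, which is odd. In the
remaining classes the product is a non-square residue: modulo `16` when `n ≡ 2, 3 (mod 4)`,
modulo `32` when `n ≡ 1 (mod 8)`, and modulo `17` when `n ≡ 5 (mod 8)`. For `n = 1` it is `900`.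
-/

theorem natCast_pow_sub_one {R : Type*} [Ring R] {a : ℕ} (ha : 0 < a) (n : ℕ) :
    ((a ^ n - 1 : ℕ) : R) = (a : R) ^ n - 1 := by
  rw [Nat.cast_sub (Nat.one_le_pow _ _ ha), Nat.cast_pow, Nat.cast_one]

theorem even_padicValNat_of_isSquare {p N : ℕ} [Fact p.Prime] (hN : IsSquare N) :
    Even (padicValNat p N) := by
  obtain ⟨r, rfl⟩ := hN
  rw [← sq, padicValNat.pow]
  exact even_two_mul _

theorem padicValNat_pow_mul_of_not_dvd {p m : ℕ} [hp : Fact p.Prime] (k : ℕ) (hm : ¬p ∣ m) :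
    padicValNat p (p ^ k * m) = k := by
  have hm0 : m ≠ 0 := by rintro rfl; exact hm (dvd_zero p)
  rw [padicValNat.mul (pow_ne_zero _ hp.out.ne_zero) hm0, padicValNat.prime_pow,
    padicValNat.eq_zero_of_not_dvd hm, add_zero]

theorem padicValNat_pow_sub_one {p a n : ℕ} [hp : Fact p.Prime] (hp_odd : Odd p) (ha : 1 < a)
    (hpa : p ∣ a - 1) (hn : n ≠ 0) :
    padicValNat p (a ^ n - 1) = padicValNat p (a - 1) + padicValNat p n := by
  have hpa' : ¬p ∣ a := fun h =>
    hp.out.not_dvd_one (by simpa [Nat.sub_sub_self ha.le] using Nat.dvd_sub h hpa)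
  simpa using padicValNat.pow_sub_pow hp_odd ha hpa hpa' hn

theorem padicValNat_five_of_four_dvd {n : ℕ} (hn : n ≠ 0) (h4 : 4 ∣ n) :
    padicValNat 5 ((13 ^ n - 1) * (76 ^ n - 1)) = 2 * padicValNat 5 n + 3 := by
  have : Fact (Nat.Prime 5) := ⟨by norm_num⟩
  obtain ⟨m, rfl⟩ := h4
  have hm : m ≠ 0 := by omega
  have h4m : padicValNat 5 (4 * m) = padicValNat 5 m := by
    rw [padicValNat.mul (by norm_num) hm, padicValNat.eq_zero_of_not_dvd (by norm_num), zero_add]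
  have h13 : padicValNat 5 (13 ^ (4 * m) - 1) = 1 + padicValNat 5 m := by
    rw [pow_mul, padicValNat_pow_sub_one (by decide) (by norm_num) (by norm_num) hm,
      show 13 ^ 4 - 1 = 5 ^ 1 * 5712 by norm_num, padicValNat_pow_mul_of_not_dvd _ (by norm_num)]
  have h76 : padicValNat 5 (76 ^ (4 * m) - 1) = 2 + padicValNat 5 m := by
    rw [padicValNat_pow_sub_one (by decide) (by norm_num) (by norm_num) hn, h4m,
      show 76 - 1 = 5 ^ 2 * 3 by norm_num, padicValNat_pow_mul_of_not_dvd _ (by norm_num)]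
  have hpos : ∀ a : ℕ, 1 < a → a ^ (4 * m) - 1 ≠ 0 := fun a ha =>
    Nat.sub_ne_zero_of_lt (Nat.one_lt_pow hn ha)
  rw [padicValNat.mul (hpos 13 (by norm_num)) (hpos 76 (by norm_num)), h13, h76, h4m]
  ring

theorem not_isSquare_of_four_dvd {n : ℕ} (hn : n ≠ 0) (h4 : 4 ∣ n) :
    ¬IsSquare ((13 ^ n - 1) * (76 ^ n - 1)) := by
  have : Fact (Nat.Prime 5) := ⟨by norm_num⟩
  intro hsq
  obtain ⟨r, hr⟩ := padicValNat_five_of_four_dvd hn h4 ▸ even_padicValNat_of_isSquare hsq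
  omega

theorem not_isSquare_of_not_isSquare_zmod (m : ℕ) {n : ℕ}
    (h : ¬IsSquare (((13 : ZMod m) ^ n - 1) * ((76 : ZMod m) ^ n - 1))) :
    ¬IsSquare ((13 ^ n - 1) * (76 ^ n - 1)) := fun hsq =>
  h (by simpa [natCast_pow_sub_one] using hsq.map (Nat.castRingHom (ZMod m)))

theorem not_isSquare_of_mod_four {n : ℕ} (hn : 2 ≤ n) (h : n % 4 = 2 ∨ n % 4 = 3) :
    ¬IsSquare ((13 ^ n - 1) * (76 ^ n - 1)) := by
  apply not_isSquare_of_not_isSquare_zmod 16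
  rw [pow_eq_pow_mod n (by decide : (13 : ZMod 16) ^ 4 = 1),
    pow_eq_zero_of_le hn (by decide : (76 : ZMod 16) ^ 2 = 0)]
  rcases h with h | h <;> rw [h] <;> decide

theorem not_isSquare_of_mod_eight_eq_one {n : ℕ} (hn : 3 ≤ n) (h : n % 8 = 1) :
    ¬IsSquare ((13 ^ n - 1) * (76 ^ n - 1)) := by
  apply not_isSquare_of_not_isSquare_zmod 32
  rw [pow_eq_pow_mod n (by decide : (13 : ZMod 32) ^ 8 = 1),
    pow_eq_zero_of_le hn (by decide : (76 : ZMod 32) ^ 3 = 0), h]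
  decide

theorem not_isSquare_of_mod_eight_eq_five {n : ℕ} (h : n % 8 = 5) :
    ¬IsSquare ((13 ^ n - 1) * (76 ^ n - 1)) := by
  apply not_isSquare_of_not_isSquare_zmod 17
  rw [pow_eq_pow_mod n (by decide : (13 : ZMod 17) ^ 8 = 1),
    pow_eq_pow_mod n (by decide : (76 : ZMod 17) ^ 8 = 1), h]
  decide

theorem not_isSquare_of_two_le {n : ℕ} (hn : 2 ≤ n) :
    ¬IsSquare ((13 ^ n - 1) * (76 ^ n - 1)) := by
  have h8 : n % 8 < 8 := Nat.mod_lt n (by norm_num)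
  interval_cases hr : n % 8
  all_goals first
    | exact not_isSquare_of_four_dvd (by omega) (by omega)
    | exact not_isSquare_of_mod_four hn (by omega)
    | exact not_isSquare_of_mod_eight_eq_one (by omega) hr
    | exact not_isSquare_of_mod_eight_eq_five hr

theorem stmt_1_general (n x : ℕ) (hx : 0 < x) :
    (13 ^ n - 1) * (76 ^ n - 1) = x ^ 2 ↔ n = 1 ∧ x = 30 := by
  refine ⟨fun h => ?_, by rintro ⟨rfl, rfl⟩; norm_num⟩
  obtain rfl : n = 1 := by
    rcases Nat.lt_or_ge n 2 with hn | hn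
    · interval_cases n
      · exact absurd h.symm (by positivity)
      · rfl
    · exact absurd ⟨x, h.trans (sq x)⟩ (not_isSquare_of_two_le hn)
  exact ⟨rfl, Nat.pow_left_injective two_ne_zero (h.symm.trans (by norm_num) : x ^ 2 = 30 ^ 2)⟩

theorem stmt_1 (n x : ℕ) (hn : 0 < n) (hx : 0 < x) :
    (13 ^ n - 1) * (76 ^ n - 1) = x ^ 2 ↔ n = 1 ∧ x = 30 :=
  stmt_1_general n x hx
end

section
/- The equation (4^n - 1)(49^n - 1) = x^2 has exactly one solution in positive integers n, x, namely n = 1, x = 12. -/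
/-!
For even `n = 2m`, lifting the exponent gives `v₅(16^m - 1) = 1 + v₅ m` and
`v₅(2401^m - 1) = 2 + v₅ m`, so the product has odd `5`-adic valuation and is not a square.

For `n ≥ 1` in general, a square product forces `4^n - 1 = d s²` and `49^n - 1 = d t²` with
a common non-square `d` (`4^n - 1 ≡ 3 mod 4`), so `(2^n, s)` and `(7^n, t)` solve the Pell
equation `x² - d y² = 1`. Solutions with odd `x` form a subgroup containing every square; it misses
`(2^n, s)`, hence the fundamental solution, so `(7^n, t)` is an even power and
`7^n = 2w² - 1`.

For odd `n = 2m + 1` this reads `2w² - 7v² = 1` with `v = 7^m`. The positive solutions are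
`w√2 + v√7 = (2√2 + √7)^(2k+1)`, and modulo `7` the `k`-th one has `v ≡ 2k + 1`, so
`7 ∣ v` forces `2k + 1 = 7(2j + 1)`. Then `v` is the `√7`-coefficient of
`(w'√2 + v'√7)^7`, namely `7v'c` with `c ≡ 1 mod 7` and `c > 1`, which is no power of `7`.
Hence `m = 0`, and `n = 1` gives `3 · 48 = 12²`.
-/

theorem Nat.exists_eq_mul_sq_of_mul_eq_sq {a b c : ℕ} (h : a * b = c ^ 2) :
    ∃ d s t, a = d * s ^ 2 ∧ b = d * t ^ 2 := by
  obtain ⟨a', b', hcop, ha, hb⟩ := Nat.exists_coprime a b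
  set g := a.gcd b
  rcases Nat.eq_zero_or_pos g with hg | hg
  · exact ⟨0, 0, 0, by simp [ha, hg], by simp [hb, hg]⟩
  obtain ⟨c', rfl⟩ : g ∣ c :=
    (Nat.pow_dvd_pow_iff two_ne_zero).1 ⟨a' * b', by rw [← h, ha, hb]; ring⟩
  have h' : a' * b' = c' ^ 2 :=
    Nat.eq_of_mul_eq_mul_left (by positivity : 0 < g ^ 2) (by rw [← mul_pow, ← h, ha, hb]; ring)
  obtain ⟨s, hs⟩ := exists_eq_pow_of_mul_eq_pow (Nat.isUnit_iff.2 hcop) h'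
  obtain ⟨t, ht⟩ :=
    exists_eq_pow_of_mul_eq_pow (Nat.isUnit_iff.2 hcop.symm) ((mul_comm _ _).trans h')
  exact ⟨g, s, t, by rw [ha, hs, mul_comm], by rw [hb, ht, mul_comm]⟩

namespace Pell.Solution₁

variable {d : ℤ}

theorem even_d_mul_y_of_odd_x {a : Solution₁ d} (ha : Odd a.x) : Even (d * a.y) := by
  have h : Even (d * a.y * a.y) := by
    rw [show d * a.y * a.y = a.x * a.x - 1 by linear_combination a.prop_y]
    exact (ha.mul ha).sub_odd odd_one
  rcases Int.even_mul.1 h with h | h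
  · exact h
  · exact h.mul_left d

variable (d) in
def oddX : Subgroup (Solution₁ d) where
  carrier := {a | Odd a.x}
  one_mem' := by simp
  mul_mem' {a b} ha hb := by
    simp only [Set.mem_ofPred_eq, x_mul, ← mul_assoc] at *
    exact (ha.mul hb).add_even ((even_d_mul_y_of_odd_x ha).mul_right _)
  inv_mem' {a} ha := by simpa using ha

theorem mem_oddX {a : Solution₁ d} : a ∈ oddX d ↔ Odd a.x := Iff.rfl

theorem x_sq (a : Solution₁ d) : (a ^ 2).x = 2 * a.x ^ 2 - 1 := by
  rw [sq, x_mul]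
  linear_combination a.prop_y

theorem sq_mem_oddX (a : Solution₁ d) : a ^ 2 ∈ oddX d := by
  rw [mem_oddX, x_sq]
  exact (even_two.mul_right _).sub_odd odd_one

theorem exists_x_eq_two_mul_sq_sub_one (h₀ : 0 < d) (hd : ¬IsSquare d) {a b : Solution₁ d}
    (ha : Even a.x) (hb : Odd b.x) (hb₀ : 0 < b.x) : ∃ w, b.x = 2 * w ^ 2 - 1 := by
  obtain ⟨f, hf⟩ := IsFundamental.exists_of_not_isSquare h₀ hd
  have hf_odd : f ∉ oddX d := by
    intro hfH
    obtain ⟨i, rfl | rfl⟩ := hf.eq_zpow_or_neg_zpow a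
    · exact Int.not_even_iff_odd.2 (zpow_mem hfH i) ha
    · exact Int.not_even_iff_odd.2 (mem_oddX.1 (zpow_mem hfH i)).neg (by rwa [← x_neg])
  obtain ⟨j, hj⟩ := hf.eq_zpow_or_neg_zpow b
  obtain ⟨c, rfl | rfl⟩ := j.even_or_odd'
  · have hsq : f ^ (2 * c) = (f ^ c) ^ 2 := by rw [mul_comm, zpow_mul]; norm_cast
    rcases hj with rfl | rfl
    · exact ⟨_, by rw [hsq, x_sq]⟩
    · refine ⟨1, ?_⟩
      rw [hsq, x_neg, x_sq] at hb₀ ⊢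
      nlinarith [sq_nonneg (f ^ c).x]
  · have hbH : f ^ (2 * c) * f ∈ oddX d := by
      rw [← zpow_add_one]
      rcases hj with rfl | rfl
      · exact hb
      · simpa [mem_oddX, x_neg] using hb
    rw [mul_comm 2 c, zpow_mul] at hbH
    exact (hf_odd ((Subgroup.mul_mem_cancel_left (oddX d) (sq_mem_oddX _)).1 hbH)).elim

end Pell.Solution₁

/- A pair `p : ℤ × ℤ` stands for `p.1 * √2 + p.2 * √7`. Multiplying it by `u ∈ ℤ[√14]`
gives a number of the same shape, `smul u p`, and its square lies in `ℤ[√14]`. -/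
namespace Sqrt2Sqrt7

def smul (u : ℤ√14) (p : ℤ × ℤ) : ℤ × ℤ :=
  (u.re * p.1 + 7 * u.im * p.2, u.re * p.2 + 2 * u.im * p.1)

def square (p : ℤ × ℤ) : ℤ√14 := ⟨2 * p.1 ^ 2 + 7 * p.2 ^ 2, 2 * p.1 * p.2⟩

theorem smul_smul (u u' : ℤ√14) (p : ℤ × ℤ) : smul u (smul u' p) = smul (u * u') p := by
  simp only [smul, Zsqrtd.re_mul, Zsqrtd.im_mul, Prod.mk.injEq]
  constructor <;> ring

theorem one_smul (p : ℤ × ℤ) : smul 1 p = p := by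
  simp [smul]

theorem square_smul (u : ℤ√14) (p : ℤ × ℤ) : square (smul u p) = u * u * square p := by
  simp only [square, smul, Zsqrtd.ext_iff, Zsqrtd.re_mul, Zsqrtd.im_mul]
  constructor <;> ring

/-- `sol k` is `(2√2 + √7) ^ (2k + 1)`; note `square (2, 1) = 15 + 4√14`. -/
def sol : ℕ → ℤ × ℤ
  | 0 => (2, 1)
  | k + 1 => smul (square (2, 1)) (sol k)

theorem sol_succ (k : ℕ) :
    sol (k + 1) = (15 * (sol k).1 + 28 * (sol k).2, 15 * (sol k).2 + 8 * (sol k).1) := by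
  simp only [sol, smul, square, Prod.mk.injEq]
  constructor <;> ring

theorem sol_add (m j : ℕ) : sol (m + j) = smul (square (2, 1) ^ j) (sol m) := by
  induction j with
  | zero => rw [pow_zero, one_smul, add_zero]
  | succ j ih => rw [← add_assoc, sol, ih, smul_smul, pow_succ']

theorem sol_seven_mul_add_three (k : ℕ) :
    sol (7 * k + 3) = smul (square (sol k) ^ 3) (sol k) := by
  induction k with
  | zero => exact sol_add 0 3
  | succ k ih =>
    rw [show 7 * (k + 1) + 3 = 7 * k + 3 + 7 by ring, sol_add, ih, smul_smul, sol, square_smul,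
      smul_smul]
    congr 1
    ring

theorem sol_mod_seven (k : ℕ) : (sol k).1 % 7 = 2 ∧ (sol k).2 % 7 = (2 * k + 1) % 7 := by
  induction k with
  | zero => decide
  | succ k ih =>
    rw [sol_succ]
    push_cast
    omega

theorem snd_sol_seven_mul_add_three (k : ℕ) :
    ∃ c, (sol (7 * k + 3)).2 = 7 * (sol k).2 * c ∧ c % 7 = 1 ∧ 1 < c := by
  rw [sol_seven_mul_add_three]
  obtain ⟨hw, -⟩ := sol_mod_seven k
  generalize sol k = p at hw ⊢
  obtain ⟨w, v⟩ := p
  dsimp only at hw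
  have hw6 : w ^ 6 ≡ 2 ^ 6 [ZMOD 7] := Int.ModEq.pow 6 hw
  refine ⟨8 * w ^ 6 + 140 * w ^ 4 * v ^ 2 + 294 * w ^ 2 * v ^ 4 + 49 * v ^ 6, ?_, ?_, ?_⟩
  · simp only [smul, square, pow_succ, pow_zero, one_mul, Zsqrtd.re_mul, Zsqrtd.im_mul]
    ring
  · rw [show 8 * w ^ 6 + 140 * w ^ 4 * v ^ 2 + 294 * w ^ 2 * v ^ 4 + 49 * v ^ 6
        = 8 * w ^ 6 + 7 * (20 * w ^ 4 * v ^ 2 + 42 * w ^ 2 * v ^ 4 + 7 * v ^ 6) by ring,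
      Int.add_mul_emod_self_left, Int.mul_emod, hw6]
    rfl
  · have : 0 < w ^ 6 := Even.pow_pos (by decide) (by omega)
    have : 0 ≤ 140 * w ^ 4 * v ^ 2 + 294 * w ^ 2 * v ^ 4 + 49 * v ^ 6 := by positivity
    linarith

theorem exists_sol_eq {w v : ℤ} (hw : 0 < w) (hv : 0 < v) (h : 2 * w ^ 2 - 7 * v ^ 2 = 1) :
    ∃ k, sol k = (w, v) := by
  lift v to ℕ using hv.le
  induction v using Nat.strong_induction_on generalizing w with
  | _ v ih =>
  by_cases hv6 : v < 6
  · have hw9 : w < 10 := by nlinarith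
    interval_cases v <;> interval_cases w <;> first | exact ⟨0, rfl⟩ | omega
  · rw [not_lt] at hv6
    -- descend along division by `15 + 4√14`
    have hw' : 28 * v < 15 * w := by nlinarith
    have hv' : 8 * w < 15 * (v : ℤ) := by nlinarith
    have hlt : 15 * v - 8 * w < v := by nlinarith
    obtain ⟨k, hk⟩ := ih (15 * v - 8 * w).toNat (by omega) (w := 15 * w - 28 * v) (by omega)
      (by omega) (by rw [Int.toNat_of_nonneg (by omega)]; linear_combination h)
    refine ⟨k + 1, ?_⟩
    rw [sol_succ, hk, Int.toNat_of_nonneg (by omega)]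
    simp only [Prod.mk.injEq]
    constructor <;> ring

theorem eq_zero_of_two_mul_sq_sub_seven_mul_seven_pow_sq {w : ℤ} {m : ℕ}
    (h : 2 * w ^ 2 - 7 * (7 ^ m) ^ 2 = 1) : m = 0 := by
  by_contra hm
  have hw : 0 < |w| := abs_pos.2 fun hw => by subst hw; nlinarith [sq_nonneg ((7 : ℤ) ^ m)]
  obtain ⟨k, hk⟩ := exists_sol_eq hw (v := 7 ^ m) (by positivity) (by rwa [sq_abs])
  have h7 : 7 ∣ (sol k).2 := by rw [hk]; exact dvd_pow_self 7 hm
  obtain ⟨j, rfl⟩ : ∃ j, k = 7 * j + 3 := ⟨k / 7, by have := (sol_mod_seven k).2; omega⟩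
  obtain ⟨c, hc, hc7, hc1⟩ := snd_sol_seven_mul_add_three j
  rw [hk] at hc
  have hcop : IsCoprime c (7 ^ m) := IsCoprime.pow_right ⟨1, -(c / 7), by omega⟩
  rcases Int.isUnit_iff.1 (hcop.isUnit_of_dvd' dvd_rfl (Dvd.intro_left _ hc.symm)) with rfl | rfl
  <;> omega

end Sqrt2Sqrt7

theorem four_pow_sub_one_mul_forty_nine_pow_sub_one_ne_sq {n : ℕ} (hn : n ≠ 0) (he : Even n)
    (x : ℕ) : (4 ^ n - 1) * (49 ^ n - 1) ≠ x ^ 2 := by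
  obtain ⟨m, rfl⟩ := he
  have hm : m ≠ 0 := by omega
  have : Fact (Nat.Prime 5) := ⟨by norm_num⟩
  have h16 := padicValNat.pow_sub_pow (p := 5) (x := 16) (y := 1) (by decide) (by norm_num)
    (by norm_num) (by norm_num) hm
  have h2401 := padicValNat.pow_sub_pow (p := 5) (x := 2401) (y := 1) (by decide) (by norm_num)
    (by norm_num) (by norm_num) hm
  have h15 : padicValNat 5 (16 - 1) = 1 := by decide +kernel
  have h2400 : padicValNat 5 (2401 - 1) = 2 := by decide +kernel
  have h16m : 1 < 16 ^ m := Nat.one_lt_pow hm (by norm_num)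
  have h2401m : 1 < 2401 ^ m := Nat.one_lt_pow hm (by norm_num)
  rw [← two_mul, pow_mul, pow_mul]
  norm_num only
  intro h
  have hv := congrArg (padicValNat 5) h
  rw [one_pow] at h16 h2401
  rw [padicValNat.mul (by omega) (by omega), padicValNat.pow, h16, h2401, h15, h2400] at hv
  omega

open Pell in
theorem exists_seven_pow_eq_two_mul_sq_sub_one {n x : ℕ} (hn : n ≠ 0)
    (h : (4 ^ n - 1) * (49 ^ n - 1) = x ^ 2) : ∃ w : ℤ, 7 ^ n = 2 * w ^ 2 - 1 := by
  obtain ⟨d, s, t, hs, ht⟩ := Nat.exists_eq_mul_sq_of_mul_eq_sq h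
  have h4 : (4 : ℤ) ≤ 4 ^ n := le_self_pow₀ (by norm_num) hn
  zify [Nat.one_le_pow n 4 (by norm_num), Nat.one_le_pow n 49 (by norm_num)] at hs ht
  have hs' : ((2 : ℤ) ^ n) ^ 2 - d * s ^ 2 = 1 := by
    rw [← pow_mul, mul_comm, pow_mul]; norm_num; linarith
  have ht' : ((7 : ℤ) ^ n) ^ 2 - d * t ^ 2 = 1 := by
    rw [← pow_mul, mul_comm, pow_mul]; norm_num; linarith
  have hd₀ : (0 : ℤ) < d := by
    rcases Nat.eq_zero_or_pos d with rfl | hd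
    · simp at hs; linarith
    · exact_mod_cast hd
  have hd : ¬IsSquare (d : ℤ) := by
    rintro ⟨r, hr⟩
    have hs4 := congrArg (Int.cast : ℤ → ZMod 4) hs
    push_cast [hr] at hs4
    rw [show (4 : ZMod 4) = 0 from rfl, zero_pow hn] at hs4
    have h4 : ((r : ZMod 4) * s) ^ 2 = -1 := by linear_combination -hs4
    generalize (r : ZMod 4) * s = z at h4
    revert z
    decide
  obtain ⟨w, hw⟩ := Solution₁.exists_x_eq_two_mul_sq_sub_one hd₀ hd (a := .mk _ _ hs')
    (b := .mk _ _ ht') (by simp [Int.even_pow, hn]) (by simpa using Odd.pow (by decide)) (by simp)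
  exact ⟨w, by simpa using hw⟩

theorem stmt_2_general (n x : ℕ) (hn : 0 < n) :
    (4 ^ n - 1) * (49 ^ n - 1) = x ^ 2 ↔ n = 1 ∧ x = 12 := by
  refine ⟨fun h => ?_, by rintro ⟨rfl, rfl⟩; norm_num⟩
  obtain ⟨m, rfl⟩ : Odd n := Nat.not_even_iff_odd.1 fun he =>
    four_pow_sub_one_mul_forty_nine_pow_sub_one_ne_sq hn.ne' he x h
  obtain ⟨w, hw⟩ := exists_seven_pow_eq_two_mul_sq_sub_one hn.ne' h
  have h7 : (7 : ℤ) ^ (2 * m + 1) = 7 * (7 ^ m) ^ 2 := by ring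
  obtain rfl : m = 0 :=
    Sqrt2Sqrt7.eq_zero_of_two_mul_sq_sub_seven_mul_seven_pow_sq (w := w)
      (by linear_combination h7 - hw)
  exact ⟨rfl, Nat.pow_left_injective two_ne_zero (by simpa using h.symm)⟩

theorem stmt_2 (n x : ℕ) (hn : 0 < n) (hx : 0 < x) :
    (4 ^ n - 1) * (49 ^ n - 1) = x ^ 2 ↔ n = 1 ∧ x = 12 :=
  stmt_2_general n x hn
end

section
/- Let a, b be integers with 1 < a < b, gcd(a,b) > 1, and ν₂(a) ≠ ν₂(b), where ν₂ denotes the 2-adic valuation. Then there are no positive integers n, x with n even such that (a^n - 1)(b^n - 1) = x^2. -/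
/-!
Write `n = 2m`, `A = aᵐ`, `B = bᵐ`. If `(A² - 1)(B² - 1)` is a square, then `A² - 1 = d u²` and
`B² - 1 = d v²` for a common `d`, so `A` and `B` are the `x`-coordinates `x_K`, `x_L` of powers of
the fundamental solution `f` of `X² - d Y² = 1`. From `x_{m+n} + x_{m-n} = 2 xₘ xₙ` one gets that
`ν₂(x_k)` depends only on the parity of `k` (it is `0` for even `k` and `ν₂(x₁)` for odd `k`),
and that all indices `k` with `p ∣ x_k` have the same parity, for any non-unit `p`. Taking
`p = gcd(a, b)` gives `K ≡ L (mod 2)`, hence `m ν₂(a) = ν₂(A) = ν₂(B) = m ν₂(b)`.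
-/

theorem Nat.exists_eq_mul_sq_of_mul_eq_sq_s3 {M N x : ℕ} (h : M * N = x ^ 2) :
    ∃ d u v : ℕ, M = d * u ^ 2 ∧ N = d * v ^ 2 := by
  obtain hg | hg := (Nat.gcd M N).eq_zero_or_pos
  · obtain ⟨rfl, rfl⟩ := Nat.gcd_eq_zero_iff.mp hg
    exact ⟨0, 0, 0, rfl, rfl⟩
  obtain ⟨g, s, t, hg0, hst, rfl, rfl⟩ := Nat.exists_coprime' hg
  obtain ⟨w, rfl⟩ : g ∣ x := by
    rw [← Nat.pow_dvd_pow_iff two_ne_zero]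
    exact ⟨s * t, by rw [← h]; ring⟩
  have hsq : s * t = w ^ 2 := by
    apply Nat.eq_of_mul_eq_mul_left (pow_pos hg0 2)
    rw [← mul_pow, ← h]; ring
  obtain ⟨u, rfl⟩ := exists_eq_pow_of_mul_eq_pow (Nat.isUnit_iff.mpr hst) hsq
  obtain ⟨v, rfl⟩ := exists_eq_pow_of_mul_eq_pow (Nat.isUnit_iff.mpr hst.symm)
    ((mul_comm _ _).trans hsq)
  exact ⟨g, u, v, mul_comm _ _, mul_comm _ _⟩

namespace Pell.Solution₁

variable {d : ℤ} (f : Solution₁ d)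

theorem x_pow_add_add_x_pow_sub {m n : ℕ} (h : n ≤ m) :
    (f ^ (m + n)).x + (f ^ (m - n)).x = 2 * (f ^ m).x * (f ^ n).x := by
  rw [pow_add, pow_sub f h, x_mul, x_mul, x_inv, y_inv]
  ring

theorem dvd_x_pow_sub {p : ℤ} {m n : ℕ} (h : n ≤ m) (hmn : p ∣ (f ^ m).x * (f ^ n).x)
    (hp : p ∣ (f ^ (m + n)).x) : p ∣ (f ^ (m - n)).x := by
  have hsum := f.x_pow_add_add_x_pow_sub h
  rw [← dvd_add_right hp, hsum, mul_assoc]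
  exact hmn.mul_left 2

theorem odd_x_pow_two_mul (k : ℕ) : Odd (f ^ (2 * k)).x := by
  have h := f.x_pow_add_add_x_pow_sub (le_refl k)
  rw [Nat.sub_self, pow_zero, x_one, ← two_mul] at h
  exact ⟨(f ^ k).x ^ 2 - 1, by linarith⟩

theorem exists_odd_x_pow_two_mul_add_one (k : ℕ) :
    ∃ c : ℤ, Odd c ∧ (f ^ (2 * k + 1)).x = f.x * c := by
  induction k with
  | zero => exact ⟨1, odd_one, by simp⟩
  | succ k ih =>
    obtain ⟨c, hc, hx⟩ := ih
    have h := f.x_pow_add_add_x_pow_sub (m := 2 * k + 2) (n := 1) (by omega)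
    rw [show 2 * k + 2 - 1 = 2 * k + 1 by omega, pow_one, hx] at h
    refine ⟨2 * (f ^ (2 * k + 2)).x - c, ?_, by linear_combination h⟩
    exact Even.sub_odd (even_two_mul _) hc

theorem padicValInt_two_x_pow (k : ℕ) :
    padicValInt 2 (f ^ k).x = if Even k then 0 else padicValInt 2 f.x := by
  have odd_val {c : ℤ} (hc : Odd c) : padicValInt 2 c = 0 :=
    padicValInt.eq_zero_of_not_dvd (by simpa [← even_iff_two_dvd] using hc)
  obtain ⟨j, rfl⟩ | ⟨j, rfl⟩ := k.even_or_odd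
  · rw [if_pos ⟨j, rfl⟩, ← two_mul]
    exact odd_val (f.odd_x_pow_two_mul j)
  obtain ⟨c, hc, hx⟩ := f.exists_odd_x_pow_two_mul_add_one j
  rw [if_neg (Nat.not_even_iff_odd.mpr ⟨j, rfl⟩), hx]
  obtain h0 | h0 := eq_or_ne f.x 0
  · rw [h0, zero_mul]
  rw [padicValInt.mul h0 (by rintro rfl; simp at hc), odd_val hc, add_zero]

/-- Indices `j` with `p ∣ xⱼ` are closed under `r ↦ |r - 2s|`, and `x₀ = 1`; descending on
`r + s` forces all such indices to have one parity. -/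
theorem mod_two_eq_of_dvd_x_pow {p : ℤ} (hp : ¬ IsUnit p) {r s : ℕ}
    (hr : p ∣ (f ^ r).x) (hs : p ∣ (f ^ s).x) : r % 2 = s % 2 := by
  obtain ⟨n, hn⟩ : ∃ n, r + s = n := ⟨_, rfl⟩
  induction n using Nat.strong_induction_on generalizing r s with
  | _ n ih =>
  wlog hsr : s ≤ r generalizing r s
  · exact (this hs hr (by omega) (by omega)).symm
  obtain rfl | hlt := hsr.eq_or_lt
  · rfl
  have hs0 : s ≠ 0 := by
    rintro rfl
    exact hp (isUnit_of_dvd_one (by simpa using hs))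
  obtain hle | hgt := le_or_gt (2 * s) r
  · have h := f.dvd_x_pow_sub (m := r - s) (n := s) (by omega) (hs.mul_left _)
      (by rwa [Nat.sub_add_cancel hlt.le])
    have := ih (r - s - s + s) (by omega) h hs rfl
    omega
  · have h := f.dvd_x_pow_sub (m := s) (n := r - s) (by omega) (hs.mul_right _)
      (by rwa [Nat.add_sub_cancel' hlt.le])
    have := ih (s - (r - s) + s) (by omega) h hs rfl
    omega

theorem exists_eq_pow_and_eq_pow {a b : Solution₁ d} (ha : 1 < a.x) (ha' : 0 ≤ a.y)
    (hb : 0 < b.x) (hb' : 0 ≤ b.y) : ∃ (f : Solution₁ d) (K L : ℕ), a = f ^ K ∧ b = f ^ L := by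
  obtain ⟨f, hf⟩ := IsFundamental.exists_of_not_isSquare (d_pos_of_one_lt_x ha)
    (d_nonsquare_of_one_lt_x ha)
  obtain ⟨K, hK⟩ := hf.eq_pow_of_nonneg (zero_lt_one.trans ha) ha'
  obtain ⟨L, hL⟩ := hf.eq_pow_of_nonneg hb hb'
  exact ⟨f, K, L, hK, hL⟩

end Pell.Solution₁

theorem Pell.exists_x_pow_eq_of_mul_eq_sq {A B x : ℕ} (hx : 0 < x)
    (h : (A ^ 2 - 1) * (B ^ 2 - 1) = x ^ 2) :
    ∃ (d : ℤ) (f : Solution₁ d) (K L : ℕ), (A : ℤ) = (f ^ K).x ∧ (B : ℤ) = (f ^ L).x := by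
  have hprod : (A ^ 2 - 1) * (B ^ 2 - 1) ≠ 0 := h ▸ (pow_pos hx 2).ne'
  obtain ⟨d, u, v, hAu, hBv⟩ := Nat.exists_eq_mul_sq_of_mul_eq_sq_s3 h
  have sol {C w : ℕ} (hC : C ^ 2 - 1 ≠ 0) (hCw : C ^ 2 - 1 = d * w ^ 2) :
      (C : ℤ) ^ 2 - d * w ^ 2 = 1 := by
    have : ((C ^ 2 : ℕ) : ℤ) = d * w ^ 2 + 1 := by norm_cast; omega
    push_cast at this; linarith
  have hA : 1 < A := (Nat.one_lt_pow_iff two_ne_zero).mp (by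
    have := left_ne_zero_of_mul hprod; omega)
  obtain ⟨f, K, L, hK, hL⟩ := Solution₁.exists_eq_pow_and_eq_pow
    (a := .mk _ _ (sol (left_ne_zero_of_mul hprod) hAu))
    (b := .mk _ _ (sol (right_ne_zero_of_mul hprod) hBv))
    (by simpa using hA) (by simp)
    (by simpa using Nat.pos_of_ne_zero (by rintro rfl; simp at hprod)) (by simp)
  exact ⟨d, f, K, L, by rw [← hK, Solution₁.x_mk], by rw [← hL, Solution₁.x_mk]⟩

theorem stmt_3_general (a b : ℕ) (hg : 1 < Nat.gcd a b)
    (hv : padicValNat 2 a ≠ padicValNat 2 b) :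
    ¬ ∃ (n x : ℕ), 0 < n ∧ 0 < x ∧ Even n ∧ (a ^ n - 1) * (b ^ n - 1) = x ^ 2 := by
  rintro ⟨n, x, hn, hx, ⟨m, rfl⟩, heq⟩
  have hm : m ≠ 0 := by omega
  rw [← two_mul, pow_mul', pow_mul'] at heq
  obtain ⟨d, f, K, L, hAK, hBL⟩ := Pell.exists_x_pow_eq_of_mul_eq_sq hx heq
  have hKL : K % 2 = L % 2 := by
    refine f.mod_two_eq_of_dvd_x_pow (p := Nat.gcd a b) (by rw [Int.isUnit_iff]; omega) ?_ ?_
    · rw [← hAK]; exact_mod_cast (Nat.gcd_dvd_left a b).trans (dvd_pow_self a hm)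
    · rw [← hBL]; exact_mod_cast (Nat.gcd_dvd_right a b).trans (dvd_pow_self b hm)
  have hval : padicValInt 2 ((a ^ m : ℕ) : ℤ) = padicValInt 2 ((b ^ m : ℕ) : ℤ) := by
    simp only [hAK, hBL, f.padicValInt_two_x_pow, Nat.even_iff, hKL]
  rw [padicValInt.of_nat, padicValInt.of_nat, padicValNat.pow, padicValNat.pow] at hval
  exact hv (Nat.eq_of_mul_eq_mul_left (Nat.pos_of_ne_zero hm) hval)

theorem stmt_3 (a b : ℕ) (ha : 1 < a) (hab : a < b) (hg : 1 < Nat.gcd a b)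
    (hv : padicValNat 2 a ≠ padicValNat 2 b) :
    ¬ ∃ (n x : ℕ), 0 < n ∧ 0 < x ∧ Even n ∧ (a ^ n - 1) * (b ^ n - 1) = x ^ 2 :=
  stmt_3_general a b hg hv
end

section
/- The equation (20^n - 1)(77^n - 1) = x^2 has exactly one solution in positive integers n, x, namely n = 1, x = 38. -/
/-!
For even `n = 2j` both factors are `(1 + 3b)^j - 1` with `b = 133` and `b = 1976`. Writing
`j = 3^t u` with `3 ∤ u`, each factor is `3^(t+1)` times a cofactor congruent to `u b` modulo 3
(lifting the exponent by hand), so a square product would force `133 · 1976 · u² ≡ 2` to be a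
square modulo 3. For odd `n ≥ 3` the product is not a square modulo 64 (where `20^n = 0`), except
when `n ≡ 5 [MOD 8]`, and then it is not a square modulo one of 13, 37, 73, in all of which `20`
and `77` have order dividing 72.
-/

lemma exists_one_add_pow_eq (M u : ℕ) : ∃ c, (1 + M) ^ u = 1 + u * M + M * M * c := by
  induction u with
  | zero => exact ⟨0, by ring⟩
  | succ u ih =>
    obtain ⟨c, hc⟩ := ih
    exact ⟨c + u + M * c, by rw [pow_succ, hc]; ring⟩

lemma exists_one_add_three_mul_pow_three_pow_eq (b t : ℕ) :
    ∃ c, (1 + 3 * b) ^ 3 ^ t = 1 + 3 ^ (t + 1) * c ∧ (c : ZMod 3) = b := by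
  induction t with
  | zero => exact ⟨b, by simp⟩
  | succ t ih =>
    obtain ⟨c, hc, hcb⟩ := ih
    refine ⟨c + 3 ^ (t + 1) * c ^ 2 + 3 ^ (2 * t + 1) * c ^ 3, ?_, ?_⟩
    · rw [pow_succ 3 t, pow_mul, hc]; ring
    · have h3 : (3 : ZMod 3) = 0 := by decide
      push_cast
      simp [h3, hcb]

lemma exists_one_add_three_mul_pow_sub_one_eq (b t u : ℕ) :
    ∃ c, (1 + 3 * b) ^ (3 ^ t * u) - 1 = 3 ^ (t + 1) * c ∧ (c : ZMod 3) = u * b := by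
  obtain ⟨d, hd, hdb⟩ := exists_one_add_three_mul_pow_three_pow_eq b t
  obtain ⟨e, he⟩ := exists_one_add_pow_eq (3 ^ (t + 1) * d) u
  refine ⟨u * d + 3 ^ (t + 1) * d * d * e, ?_, ?_⟩
  · rw [pow_mul, hd, he]
    ring_nf
    omega
  · have h3 : (3 : ZMod 3) = 0 := by decide
    push_cast
    simp [h3, hdb]

theorem not_isSquare_one_add_three_mul_pow_sub_one_mul {b b' j : ℕ} (hj : j ≠ 0)
    (hbb' : (b * b' : ZMod 3) = 2) :
    ¬ IsSquare (((1 + 3 * b) ^ j - 1) * ((1 + 3 * b') ^ j - 1)) := by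
  obtain ⟨t, u, hu, rfl⟩ := Nat.exists_eq_pow_mul_and_not_dvd hj 3 (by norm_num)
  obtain ⟨c, hc, hcu⟩ := exists_one_add_three_mul_pow_sub_one_eq b t u
  obtain ⟨c', hc', hcu'⟩ := exists_one_add_three_mul_pow_sub_one_eq b' t u
  rintro ⟨x, hx⟩
  rw [hc, hc'] at hx
  have hsq : (3 ^ (t + 1)) ^ 2 * (c * c') = x ^ 2 := by rw [← sq] at hx; rw [← hx]; ring
  obtain ⟨y, rfl⟩ : 3 ^ (t + 1) ∣ x := (Nat.pow_dvd_pow_iff two_ne_zero).mp ⟨_, hsq.symm⟩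
  have hy : c * c' = y ^ 2 := by
    rw [mul_pow] at hsq
    exact Nat.eq_of_mul_eq_mul_left (by positivity) hsq
  have hu3 : (u : ZMod 3) ≠ 0 := by rwa [ne_eq, ZMod.natCast_eq_zero_iff]
  have two_mul_sq_not_sq : ∀ u y : ZMod 3, u ≠ 0 → y ^ 2 ≠ u ^ 2 * 2 := by decide
  apply two_mul_sq_not_sq _ y hu3
  rw [← hbb', ← Nat.cast_pow, ← hy]
  push_cast
  rw [hcu, hcu']
  ring

def prodPowSubOne {R : Type*} [CommRing R] (a b : R) (n : ℕ) : R := (a ^ n - 1) * (b ^ n - 1)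

lemma isSquare_prodPowSubOne_natCast {a b n x : ℕ} (ha : 0 < a) (hb : 0 < b)
    (h : (a ^ n - 1) * (b ^ n - 1) = x ^ 2) (R : Type*) [CommRing R] :
    IsSquare (prodPowSubOne (a : R) b n) := by
  refine ⟨x, ?_⟩
  have hcast := congrArg (Nat.cast (R := R)) h
  push_cast [Nat.cast_sub (Nat.one_le_pow n a ha), Nat.cast_sub (Nat.one_le_pow n b hb)] at hcast
  rw [prodPowSubOne, hcast, sq]

lemma prodPowSubOne_mod {R : Type*} [CommRing R] {a b : R} {L : ℕ} (ha : a ^ L = 1)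
    (hb : b ^ L = 1) (n : ℕ) : prodPowSubOne a b n = prodPowSubOne a b (n % L) := by
  rw [prodPowSubOne, prodPowSubOne, pow_eq_pow_mod n ha, pow_eq_pow_mod n hb]

lemma exists_not_isSquare_prodPowSubOne_of_odd {n : ℕ} (h3 : 3 ≤ n) (hn : n % 2 = 1) :
    ∃ q, ¬ IsSquare (prodPowSubOne (20 : ZMod q) 77 n) := by
  by_cases h5 : n % 8 = 5
  · have obstruction : ∀ r < 72, r % 8 = 5 →
        ¬ IsSquare (prodPowSubOne (20 : ZMod 13) 77 r) ∨
        ¬ IsSquare (prodPowSubOne (20 : ZMod 37) 77 r) ∨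
        ¬ IsSquare (prodPowSubOne (20 : ZMod 73) 77 r) := by
      decide +kernel
    rcases obstruction (n % 72) (Nat.mod_lt _ (by norm_num)) (by omega) with h | h | h
    · exact ⟨13, by rwa [prodPowSubOne_mod (L := 72) (by decide) (by decide)]⟩
    · exact ⟨37, by rwa [prodPowSubOne_mod (L := 72) (by decide) (by decide)]⟩
    · exact ⟨73, by rwa [prodPowSubOne_mod (L := 72) (by decide) (by decide)]⟩
  · have obstruction : ∀ r < 16, r % 2 = 1 → r % 8 ≠ 5 → ¬ IsSquare (1 - (77 : ZMod 64) ^ r) := by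
      decide +kernel
    have h20 : (20 : ZMod 64) ^ n = 0 := by
      obtain ⟨m, rfl⟩ := Nat.exists_eq_add_of_le h3
      rw [pow_add, show (20 : ZMod 64) ^ 3 = 0 by decide, zero_mul]
    refine ⟨64, ?_⟩
    rw [prodPowSubOne, h20, pow_eq_pow_mod n (show (77 : ZMod 64) ^ 16 = 1 by decide)]
    convert obstruction (n % 16) (Nat.mod_lt _ (by norm_num)) (by omega) (by omega) using 2
    ring

theorem stmt_6_general (n x : ℕ) (hn : 0 < n) :
    (20 ^ n - 1) * (77 ^ n - 1) = x ^ 2 ↔ n = 1 ∧ x = 38 := by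
  refine ⟨fun h => ?_, by rintro ⟨rfl, rfl⟩; norm_num⟩
  obtain rfl : n = 1 := by
    by_contra hn1
    obtain ⟨j, rfl | rfl⟩ := Nat.even_or_odd' n
    · apply not_isSquare_one_add_three_mul_pow_sub_one_mul (b := 133) (b' := 1976)
        (j := j) (by omega) (by decide)
      rw [show 1 + 3 * 133 = 20 ^ 2 by norm_num, show 1 + 3 * 1976 = 77 ^ 2 by norm_num,
        ← pow_mul, ← pow_mul, h]
      exact ⟨x, sq x⟩
    · obtain ⟨q, hq⟩ := exists_not_isSquare_prodPowSubOne_of_odd (n := 2 * j + 1) (by omega)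
        (by omega)
      exact hq (by simpa using isSquare_prodPowSubOne_natCast (by norm_num) (by norm_num) h (ZMod q))
  exact ⟨rfl, Nat.pow_left_injective two_ne_zero (h.symm.trans (by norm_num) : x ^ 2 = 38 ^ 2)⟩

theorem stmt_6 (n x : ℕ) (hn : 0 < n) (hx : 0 < x) :
    (20 ^ n - 1) * (77 ^ n - 1) = x ^ 2 ↔ n = 1 ∧ x = 38 :=
  stmt_6_general n x hn
end

section
/- The equation (12^n - 1)(45^n - 1) = x^2 has exactly one solution in positive integers n, x, namely n = 1, x = 22. -/
/-!
For odd `n ≥ 3` the left-hand side is a non-square modulo `32`, `13` or `73`, depending on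
`n mod 72`.

For even `n = 2H` write `12ⁿ - 1 = w²u` with `u` squarefree. Then `45ⁿ - 1 = uv²` and
`u ≡ 7 (mod 8)`, so `(12ᴴ, w)` and `(45ᴴ, v)` solve the Pell equation `X² - uY² = 1`. Running
Euclid's algorithm on the exponents with `x_{i+j} + x_{i-j} = 2 x_i x_j` shows that the gcd of
two `x`-coordinates of solutions is again one, so `3ᴴ = gcd(12ᴴ, 45ᴴ)` is: `3ⁿ - 1 = ue²`.
Finally, a number `u·(square)` with `u ≡ 7 (mod 8)` is `4ᵗ` times something `≡ 7 (mod 8)`,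
whereas for `n = 2ˢm`, `m` odd, both `3ⁿ - 1` and `45ⁿ - 1` are `2^(s+2)` times an odd number,
and for `s ≥ 2` these odd numbers are `≡ 5m` and `≡ m (mod 8)`.
-/

namespace Pell.Solution₁

variable {d : ℤ}

theorem x_zpow_add_add_x_zpow_sub (a : Solution₁ d) (i j : ℤ) :
    (a ^ (i + j)).x + (a ^ (i - j)).x = 2 * (a ^ i).x * (a ^ j).x := by
  rw [zpow_add, zpow_sub, x_mul, x_mul, x_inv, y_inv]
  ring

theorem x_zpow_eq_x_pow_natAbs (a : Solution₁ d) (n : ℤ) : (a ^ n).x = (a ^ n.natAbs).x := by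
  obtain ⟨m, rfl | rfl⟩ := Int.eq_nat_or_neg n <;> simp [x_inv]

theorem gcd_x_pow_eq_gcd_x_pow_natAbs_sub (a : Solution₁ d) (j k : ℕ) :
    Int.gcd (a ^ j).x (a ^ k).x = Int.gcd (a ^ ((j : ℤ) - 2 * k).natAbs).x (a ^ k).x := by
  have h := x_zpow_add_add_x_zpow_sub a (j - k) k
  rw [sub_add_cancel, sub_sub, ← two_mul, zpow_natCast, zpow_natCast, x_zpow_eq_x_pow_natAbs,
    ← eq_sub_iff_add_eq'] at h
  rw [h, Int.gcd_mul_right_sub_left]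

theorem exists_natAbs_x_pow_eq_gcd (a : Solution₁ d) (j k : ℕ) :
    ∃ i : ℕ, (a ^ i).x.natAbs = Int.gcd (a ^ j).x (a ^ k).x := by
  induction h : j + k using Nat.strong_induction_on generalizing j k with
  | _ N ih =>
  rcases Nat.lt_trichotomy k j with hkj | rfl | hjk
  · rcases k.eq_zero_or_pos with rfl | hk
    · exact ⟨0, by simp⟩
    obtain ⟨i, hi⟩ := ih (((j : ℤ) - 2 * k).natAbs + k) (by omega) _ k rfl
    exact ⟨i, hi.trans (gcd_x_pow_eq_gcd_x_pow_natAbs_sub a j k).symm⟩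
  · exact ⟨k, by simp⟩
  · rcases j.eq_zero_or_pos with rfl | hj
    · exact ⟨0, by simp⟩
    obtain ⟨i, hi⟩ := ih (((k : ℤ) - 2 * j).natAbs + j) (by omega) _ j rfl
    rw [Int.gcd_comm]
    exact ⟨i, hi.trans (gcd_x_pow_eq_gcd_x_pow_natAbs_sub a k j).symm⟩

theorem exists_natAbs_x_eq_gcd (h₀ : 0 < d) (hd : ¬IsSquare d) (a b : Solution₁ d) :
    ∃ c : Solution₁ d, c.x.natAbs = Int.gcd a.x b.x := by
  obtain ⟨ε, hε⟩ := IsFundamental.exists_of_not_isSquare h₀ hd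
  have h_natAbs_x (c : Solution₁ d) : ∃ n : ℕ, c.x.natAbs = (ε ^ n).x.natAbs := by
    obtain ⟨n, rfl | rfl⟩ := hε.eq_zpow_or_neg_zpow c <;>
      exact ⟨n.natAbs, by simp [x_zpow_eq_x_pow_natAbs]⟩
  obtain ⟨j, hj⟩ := h_natAbs_x a
  obtain ⟨k, hk⟩ := h_natAbs_x b
  obtain ⟨i, hi⟩ := exists_natAbs_x_pow_eq_gcd ε j k
  refine ⟨ε ^ i, ?_⟩
  rw [hi, Int.gcd_eq_natAbs_gcd_natAbs, Int.gcd_eq_natAbs_gcd_natAbs, hj, hk]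

end Pell.Solution₁

namespace Nat

theorem padicValNat_two_pow_mul_odd {r a : ℕ} (ha : Odd a) : padicValNat 2 (2 ^ r * a) = r := by
  rw [padicValNat.mul (by positivity) ha.pos.ne', padicValNat.prime_pow,
    padicValNat.eq_zero_of_not_dvd ha.not_two_dvd_nat, add_zero]

theorem two_pow_mul_odd_inj {r s a b : ℕ} (ha : Odd a) (hb : Odd b) (h : 2 ^ r * a = 2 ^ s * b) :
    r = s ∧ a = b := by
  have hrs : r = s := by
    rw [← padicValNat_two_pow_mul_odd (r := r) ha, h, padicValNat_two_pow_mul_odd hb]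
  subst hrs
  exact ⟨rfl, Nat.eq_of_mul_eq_mul_left (by positivity) h⟩

theorem mod_eight_eq_seven_of_sq_mul {w u : ℕ} (h : w ^ 2 * u % 8 = 7) : u % 8 = 7 := by
  have key : ∀ a < 8, ∀ b < 8, a ^ 2 % 8 * b % 8 = 7 → b = 7 := by decide
  rw [mul_mod, pow_mod] at h
  exact key (w % 8) (mod_lt _ (by norm_num)) (u % 8) (mod_lt _ (by norm_num)) h

theorem mul_sq_mod_eight_eq_seven {u z : ℕ} (hu : u % 8 = 7) (hz : Odd z) :
    u * z ^ 2 % 8 = 7 := by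
  have key : ∀ a < 8, a % 2 = 1 → 7 * (a ^ 2 % 8) % 8 = 7 := by decide
  rw [Nat.mul_mod, hu, Nat.pow_mod]
  exact key (z % 8) (mod_lt _ (by norm_num))
    (by rw [mod_mod_of_dvd _ (by norm_num)]; exact odd_iff.mp hz)

theorem even_and_mod_eight_eq_seven_of_two_pow_mul_eq_mul_sq {r c u v : ℕ} (hc : Odd c)
    (hu : u % 8 = 7) (h : 2 ^ r * c = u * v ^ 2) : Even r ∧ c % 8 = 7 := by
  have hv : v ≠ 0 := by
    rintro rfl
    simp [hc.pos.ne'] at h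
  obtain ⟨t, z, hz, rfl⟩ := exists_eq_two_pow_mul_odd hv
  have huz : u * z ^ 2 % 8 = 7 := mul_sq_mod_eight_eq_seven hu hz
  have h' : 2 ^ r * c = 2 ^ (2 * t) * (u * z ^ 2) := by rw [h]; ring
  obtain ⟨rfl, rfl⟩ := two_pow_mul_odd_inj hc (Nat.odd_iff.mpr (by omega)) h'
  exact ⟨even_two_mul t, huz⟩

theorem pow_eq_two_pow_mul_add_one {b r c : ℕ} (hr : 3 ≤ r) (hb : b = 2 ^ r * c + 1) (m : ℕ) :
    ∃ c', b ^ m = 2 ^ r * c' + 1 ∧ c' % 8 = c * m % 8 := by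
  obtain ⟨q, hq⟩ : 8 ∣ 2 ^ r := (Nat.pow_dvd_pow 2 hr : 2 ^ 3 ∣ 2 ^ r)
  induction m with
  | zero => exact ⟨0, by simp⟩
  | succ m ih =>
    obtain ⟨c', hc', hc'8⟩ := ih
    refine ⟨c' + c + 2 ^ r * c' * c, by rw [pow_succ, hc', hb]; ring, ?_⟩
    rw [hq, mul_add, mul_one]
    simp only [mul_assoc]
    omega

theorem pow_two_pow_eq_two_pow_mul_add_one {b r c : ℕ} (hr : 4 ≤ r) (hb : b = 2 ^ r * c + 1)
    (k : ℕ) : ∃ c', b ^ 2 ^ k = 2 ^ (r + k) * c' + 1 ∧ c' % 8 = c % 8 := by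
  induction k with
  | zero => exact ⟨c, by simp [hb], rfl⟩
  | succ k ih =>
    obtain ⟨c', hc', hc'8⟩ := ih
    obtain ⟨e, he⟩ : ∃ e, r + k = e + 1 := ⟨r + k - 1, by omega⟩
    obtain ⟨q, hq⟩ : 8 ∣ 2 ^ e := Nat.pow_dvd_pow 2 (by omega : 3 ≤ e)
    refine ⟨c' + 2 ^ e * c' ^ 2, ?_, ?_⟩
    · rw [pow_succ, pow_mul, hc', ← add_assoc, he]; ring
    · rw [hq, mul_assoc]; omega

theorem pow_two_pow_mul_eq_two_pow_mul_add_one {b r c : ℕ} (hr : 4 ≤ r) (hb : b = 2 ^ r * c + 1)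
    (k m : ℕ) : ∃ c', b ^ (2 ^ k * m) = 2 ^ (r + k) * c' + 1 ∧ c' % 8 = c * m % 8 := by
  obtain ⟨c₁, hc₁, hc₁8⟩ := pow_two_pow_eq_two_pow_mul_add_one hr hb k
  obtain ⟨c', hc', hc'8⟩ := pow_eq_two_pow_mul_add_one (by omega) hc₁ m
  exact ⟨c', by rw [pow_mul, hc'], by rw [hc'8, Nat.mul_mod, hc₁8, ← Nat.mul_mod]⟩

theorem not_isSquare_of_mod_eight_eq_seven {u : ℕ} (hu : u % 8 = 7) : ¬IsSquare u := by
  rintro ⟨r, rfl⟩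
  have key : ∀ a < 8, a * a % 8 ≠ 7 := by decide
  exact key (r % 8) (mod_lt _ (by norm_num)) (by rwa [← Nat.mul_mod])

theorem exists_eq_mul_sq_of_sq_mul_mul_eq_sq {u w b x : ℕ} (hu : Squarefree u) (hw : w ≠ 0)
    (h : w ^ 2 * u * b = x ^ 2) : ∃ v, b = u * v ^ 2 := by
  obtain ⟨q, rfl⟩ : w ∣ x := (Nat.pow_dvd_pow_iff two_ne_zero).mp ⟨u * b, by rw [← h]; ring⟩
  have hub : u * b = q ^ 2 :=
    Nat.eq_of_mul_eq_mul_left (pow_pos (Nat.pos_of_ne_zero hw) 2) (by rw [← mul_assoc, h]; ring)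
  obtain ⟨v, rfl⟩ : u ∣ q := (hu.dvd_pow_iff_dvd two_ne_zero).mp ⟨b, hub.symm⟩
  refine ⟨v, Nat.eq_of_mul_eq_mul_left (Nat.pos_of_ne_zero hu.ne_zero) ?_⟩
  rw [hub]; ring

theorem exists_gcd_sq_eq_mul_sq_add_one {d a b w v : ℕ} (hd₀ : 0 < d) (hd : ¬IsSquare d)
    (ha : a ^ 2 = d * w ^ 2 + 1) (hb : b ^ 2 = d * v ^ 2 + 1) :
    ∃ e, Nat.gcd a b ^ 2 = d * e ^ 2 + 1 := by
  let sa : Pell.Solution₁ (d : ℤ) := .mk a w (by rw [sub_eq_iff_eq_add']; exact_mod_cast ha)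
  let sb : Pell.Solution₁ (d : ℤ) := .mk b v (by rw [sub_eq_iff_eq_add']; exact_mod_cast hb)
  obtain ⟨c, hc⟩ := Pell.Solution₁.exists_natAbs_x_eq_gcd (by exact_mod_cast hd₀)
    (by rwa [Int.isSquare_natCast_iff]) sa sb
  refine ⟨c.y.natAbs, ?_⟩
  have hx : c.x.natAbs = Nat.gcd a b := by rw [hc]; exact Int.gcd_natCast_natCast a b
  rw [← hx]
  zify
  rw [sq_abs, sq_abs, ← sub_eq_iff_eq_add']
  exact c.prop

end Nat

theorem three_pow_and_forty_five_pow_not_both_mul_sq_add_one {n u e v : ℕ} (hn : Even n)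
    (hn₀ : n ≠ 0) (hu : u % 8 = 7) : ¬(3 ^ n = u * e ^ 2 + 1 ∧ 45 ^ n = u * v ^ 2 + 1) := by
  rintro ⟨h3, h45⟩
  obtain ⟨s, m, hm, rfl⟩ := Nat.exists_eq_two_pow_mul_odd hn₀
  have hm2 : m % 2 = 1 := Nat.odd_iff.mp hm
  match s with
  | 0 => simp only [pow_zero, one_mul] at hn; exact Nat.not_even_iff_odd.mpr hm hn
  | 1 =>
    obtain ⟨c, hc, hc8⟩ := Nat.pow_eq_two_pow_mul_add_one (b := 9) (c := 1) le_rfl rfl m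
    rw [pow_one, pow_mul, show 3 ^ 2 = 9 by rfl, hc, add_left_inj] at h3
    exact absurd (Nat.even_and_mod_eight_eq_seven_of_two_pow_mul_eq_mul_sq
      (Nat.odd_iff.mpr (by omega)) hu h3).1 (by decide)
  | k + 2 =>
    -- `3⁴ = 2⁴ · 5 + 1` and `45⁴ = 2⁴ · 256289 + 1`, with `256289 ≡ 1 (mod 8)`
    obtain ⟨c, hc, hc8⟩ := Nat.pow_two_pow_mul_eq_two_pow_mul_add_one (b := 81) (c := 5)
      (le_refl 4) rfl k m
    obtain ⟨c', hc', hc'8⟩ := Nat.pow_two_pow_mul_eq_two_pow_mul_add_one (b := 45 ^ 4)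
      (c := 256289) (le_refl 4) rfl k m
    have hn : 2 ^ (k + 2) * m = 4 * (2 ^ k * m) := by ring
    rw [hn, pow_mul, show 3 ^ 4 = 81 by rfl, hc, add_left_inj] at h3
    rw [hn, pow_mul, hc', add_left_inj] at h45
    have h7 := (Nat.even_and_mod_eight_eq_seven_of_two_pow_mul_eq_mul_sq
      (Nat.odd_iff.mpr (by omega)) hu h3).2
    have h7' := (Nat.even_and_mod_eight_eq_seven_of_two_pow_mul_eq_mul_sq
      (Nat.odd_iff.mpr (by omega)) hu h45).2
    omega

theorem twelve_forty_five_ne_sq_of_even {n x : ℕ} (hn : Even n) (hn₀ : n ≠ 0) :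
    (12 ^ n - 1) * (45 ^ n - 1) ≠ x ^ 2 := by
  intro h
  obtain ⟨u, w, hwu, hu⟩ := Nat.sq_mul_squarefree (12 ^ n - 1)
  have h12 : (12 ^ n - 1) % 8 = 7 := by
    have : 8 ∣ 12 ^ n := Nat.dvd_trans (by norm_num : 8 ∣ 12 ^ 2) (Nat.pow_dvd_pow 12 (by grind))
    have : 0 < 12 ^ n := by positivity
    omega
  have hu8 : u % 8 = 7 := Nat.mod_eight_eq_seven_of_sq_mul (hwu ▸ h12)
  have hw : w ≠ 0 := by rintro rfl; simp [← hwu] at h12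
  obtain ⟨v, hv⟩ := Nat.exists_eq_mul_sq_of_sq_mul_mul_eq_sq hu hw (hwu ▸ h)
  obtain ⟨H, rfl⟩ := hn
  have h2H : ∀ a : ℕ, a ^ (H + H) = (a ^ H) ^ 2 := fun a => by ring
  have h12pos : 0 < 12 ^ (H + H) := by positivity
  have h45pos : 0 < 45 ^ (H + H) := by positivity
  obtain ⟨e, he⟩ := Nat.exists_gcd_sq_eq_mul_sq_add_one (a := 12 ^ H) (b := 45 ^ H) (w := w)
    (v := v) (by omega) (Nat.not_isSquare_of_mod_eight_eq_seven hu8)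
    (by rw [← h2H, mul_comm, hwu]; omega) (by rw [← h2H, ← hv]; omega)
  rw [Nat.pow_gcd_pow, show Nat.gcd 12 45 = 3 by rfl, ← h2H] at he
  exact three_pow_and_forty_five_pow_not_both_mul_sq_add_one (v := v) ⟨H, rfl⟩ hn₀ hu8
    ⟨he, by omega⟩

set_option maxRecDepth 10000 in
theorem twelve_forty_five_ne_sq_of_odd {n x : ℕ} (hn : Odd n) (h3 : 3 ≤ n) :
    (12 ^ n - 1) * (45 ^ n - 1) ≠ x ^ 2 := by
  intro h
  have hZ (M : ℕ) : ((12 : ZMod M) ^ n - 1) * ((45 : ZMod M) ^ n - 1) = (x : ZMod M) ^ 2 := by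
    have := congrArg (Nat.cast : ℕ → ZMod M) h
    push_cast [Nat.one_le_pow, Nat.cast_sub] at this
    exact this
  have key : ∀ r < 72, r % 2 = 1 →
      (∀ y : ZMod 32, y ^ 2 ≠ 1 - 45 ^ r) ∨
      (∀ y : ZMod 13, y ^ 2 ≠ (12 ^ r - 1) * (45 ^ r - 1)) ∨
      (∀ y : ZMod 73, y ^ 2 ≠ (12 ^ r - 1) * (45 ^ r - 1)) := by
    decide
  -- modulo `32`, `12ⁿ = 0` as `n ≥ 3`; all other bases have order dividing `72`
  rcases key (n % 72) (Nat.mod_lt _ (by norm_num)) (by grind) with h32 | h13 | h73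
  · apply h32 x
    rw [← pow_eq_pow_mod n (by decide), ← hZ 32, pow_eq_zero_of_le h3 (by decide)]
    ring
  · apply h13 x
    rw [← pow_eq_pow_mod n (by decide), ← pow_eq_pow_mod n (by decide), hZ 13]
  · apply h73 x
    rw [← pow_eq_pow_mod n (by decide), ← pow_eq_pow_mod n (by decide), hZ 73]

theorem stmt_7_general (n x : ℕ) (hn : 0 < n) :
    (12 ^ n - 1) * (45 ^ n - 1) = x ^ 2 ↔ n = 1 ∧ x = 22 := by
  refine ⟨fun h => ?_, by rintro ⟨rfl, rfl⟩; norm_num⟩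
  rcases Nat.even_or_odd n with hn_even | hn_odd
  · exact absurd h (twelve_forty_five_ne_sq_of_even hn_even hn.ne')
  obtain rfl | h3 : n = 1 ∨ 3 ≤ n := by obtain ⟨k, rfl⟩ := hn_odd; omega
  · exact ⟨rfl, Nat.pow_left_injective two_ne_zero (by simpa using h.symm)⟩
  · exact absurd h (twelve_forty_five_ne_sq_of_odd hn_odd h3)

theorem stmt_7 (n x : ℕ) (hn : 0 < n) (hx : 0 < x) :
    (12 ^ n - 1) * (45 ^ n - 1) = x ^ 2 ↔ n = 1 ∧ x = 22 :=
  stmt_7_general n x hn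
end

section
/- Let a, b be integers with 1 < a < b, a ∤ b, b ∤ a, and g = gcd(a,b) > 1. If g² > a or g² > b, then there are no positive integers n, x with n even such that (a^n - 1)(b^n - 1) = x^2. -/
/-!
Write `n = 2m`, `A = a ^ m`, `B = b ^ m`. As `(A² - 1)(B² - 1)` is a square, `A² - 1 = D u²` and
`B² - 1 = D v²` with a common squarefree `D`, so `A` and `B` are `x`-coordinates of solutions of
the Pell equation `X² - D Y² = 1`: with `ε` the fundamental solution, `A = x(εᵏ)` and
`B = ±x(εˡ)`. Modulo `A` we have `ε²ᵏ ≡ -1`, so `x(εˡ) ≡ ±x(εʲ)` for some `0 ≤ j ≤ k`, and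
`c = gcd(a, b) ^ m`, a common divisor of `A` and `B`, divides `x(εʲ)`. If `j < k`, then `c` also
divides `y(εᵏ⁻ʲ)`, which forces `A ≥ x(εʲ) x(εᵏ⁻ʲ) > c²`, contradicting `gcd(a, b)² > a`.
Hence `j = k`, `A ∣ B`, and `a ∣ b`.
-/

theorem Nat.exists_squarefree_mul_sq_of_mul_eq_sq {M N x : ℕ} (hM : M ≠ 0)
    (h : M * N = x ^ 2) : ∃ D u v : ℕ, Squarefree D ∧ M = D * u ^ 2 ∧ N = D * v ^ 2 := by
  obtain ⟨D, u, rfl, hD⟩ := Nat.sq_mul_squarefree M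
  have hu : u ≠ 0 := by rintro rfl; simp at hM
  obtain ⟨t, rfl⟩ : u ∣ x := (Nat.pow_dvd_pow_iff two_ne_zero).1 ⟨D * N, by rw [← h]; ring⟩
  have hDN : D * N = t ^ 2 := by
    apply Nat.eq_of_mul_eq_mul_left (pow_pos (Nat.pos_of_ne_zero hu) 2)
    rw [← mul_assoc, h]; ring
  obtain ⟨s, rfl⟩ : D ∣ t := (hD.dvd_pow_iff_dvd two_ne_zero).1 ⟨N, hDN.symm⟩
  refine ⟨D, u, s, hD, by ring, Nat.eq_of_mul_eq_mul_left (Nat.pos_of_ne_zero hD.ne_zero) ?_⟩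
  rw [hDN]; ring

namespace Pell.Solution₁

variable {d : ℤ}

/-- The `x`-part of `a * (b ^ 2 + 1) = 2 * b.x * (a * b)`, as `b + b⁻¹ = 2 * b.x`. -/
theorem x_mul_sq_add_x (a b : Solution₁ d) : (a * b ^ 2).x + a.x = 2 * b.x * (a * b).x := by
  simp only [sq, x_mul, y_mul]
  linear_combination (-a.x) * b.prop

theorem x_zpow_neg (a : Solution₁ d) (n : ℤ) : (a ^ (-n)).x = (a ^ n).x := by
  rw [zpow_neg, x_inv]

theorem dvd_x_zpow_add_two_mul_iff {a : Solution₁ d} {c k : ℤ} (hck : c ∣ (a ^ k).x) (n : ℤ) :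
    c ∣ (a ^ (n + 2 * k)).x ↔ c ∣ (a ^ n).x := by
  have h := x_mul_sq_add_x (a ^ n) (a ^ k)
  rw [← zpow_natCast, ← zpow_mul, ← zpow_add, mul_comm k, Nat.cast_ofNat] at h
  rw [eq_sub_of_add_eq h, dvd_sub_right]
  exact (hck.mul_left 2).mul_right _

theorem exists_forall_dvd_x_zpow_iff (a : Solution₁ d) {k : ℕ} (hk : 0 < k) (l : ℤ) :
    ∃ j : ℕ, j ≤ k ∧ ∀ c : ℤ, c ∣ (a ^ k).x → (c ∣ (a ^ l).x ↔ c ∣ (a ^ j).x) := by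
  set r := Int.bmod l (2 * k)
  have hr : -(k : ℤ) ≤ r ∧ r < k := by
    have h1 := Int.le_bmod (x := l) (m := 2 * k) (by omega)
    have h2 := Int.bmod_lt (x := l) (m := 2 * k) (by omega)
    omega
  obtain ⟨q, hq⟩ : ((2 * k : ℕ) : ℤ) ∣ l - r :=
    Int.ModEq.dvd (Int.bmod_emod (x := l) (m := 2 * k))
  refine ⟨r.natAbs, by omega, fun c hck => ?_⟩
  have hper : Function.Periodic (fun n : ℤ => c ∣ (a ^ n).x) (2 * k) := fun n => propext <|
    dvd_x_zpow_add_two_mul_iff (by rwa [zpow_natCast]) n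
  have hl : l = r + q * (2 * k) := by push_cast at hq; linarith
  have hrr : (a ^ r).x = (a ^ (r.natAbs : ℤ)).x := by
    rcases Int.natAbs_eq r with h | h
    · rw [← h]
    · rw [h, x_zpow_neg, Int.natAbs_neg, Int.natAbs_natCast]
  rw [← zpow_natCast a r.natAbs, ← hrr, hl]
  exact iff_of_eq (hper.int_mul q r)

theorem sq_lt_x_zpow_of_dvd {a : Solution₁ d} (hax : 1 < a.x) (hay : 0 < a.y) {c j k : ℤ}
    (hc : 0 < c) (hj : 0 ≤ j) (hjk : j < k) (hcj : c ∣ (a ^ j).x) (hck : c ∣ (a ^ k).x) :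
    c ^ 2 < (a ^ k).x := by
  have hd : 0 < d := d_pos_of_one_lt_x hax
  have hx0 : ∀ n : ℤ, 0 < (a ^ n).x := x_zpow_pos (by linarith)
  obtain ⟨e, rfl⟩ : ∃ e, k = j + e := ⟨k - j, by ring⟩
  have hxk : (a ^ (j + e)).x = (a ^ j).x * (a ^ e).x + d * ((a ^ j).y * (a ^ e).y) := by
    rw [zpow_add, x_mul]
  have hye : (a ^ e).y = (a ^ (j + e)).y * (a ^ j).x - (a ^ (j + e)).x * (a ^ j).y := by
    rw [show a ^ e = a ^ (j + e) * (a ^ j)⁻¹ by group, y_mul, x_inv, y_inv]; ring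
  have hye_pos : 0 < (a ^ e).y := y_zpow_pos (by linarith) hay (by omega)
  have hyj : 0 ≤ (a ^ j).y := by
    rcases hj.eq_or_lt with rfl | hj
    · simp
    · exact (y_zpow_pos (by linarith) hay hj).le
  have hc_ye : c ≤ (a ^ e).y :=
    Int.le_of_dvd hye_pos (hye ▸ dvd_sub (hcj.mul_left _) (hck.mul_right _))
  have hc_xe : c < (a ^ e).x := by
    refine lt_of_pow_lt_pow_left₀ 2 (hx0 e).le ?_
    have h1 : c ^ 2 ≤ (a ^ e).y ^ 2 := pow_le_pow_left₀ hc.le hc_ye 2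
    have h2 : (a ^ e).y ^ 2 ≤ d * (a ^ e).y ^ 2 := le_mul_of_one_le_left (sq_nonneg _) hd
    linarith [(a ^ e).prop_x]
  have hc_xj : c ≤ (a ^ j).x := Int.le_of_dvd (hx0 j) hcj
  calc c ^ 2 = c * c := sq c
    _ < (a ^ j).x * (a ^ e).x := mul_lt_mul' hc_xj hc_xe hc.le (hx0 j)
    _ ≤ (a ^ (j + e)).x := by rw [hxk]; nlinarith [mul_nonneg hyj hye_pos.le]

theorem x_pow_dvd_x_zpow_of_lt_sq {a : Solution₁ d} (hax : 1 < a.x) (hay : 0 < a.y) {c : ℤ}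
    (hc : 0 < c) {k : ℕ} {l : ℤ} (hck : c ∣ (a ^ k).x) (hcl : c ∣ (a ^ l).x)
    (hlt : (a ^ k).x < c ^ 2) : (a ^ k).x ∣ (a ^ l).x := by
  rcases Nat.eq_zero_or_pos k with rfl | hk
  · simp
  obtain ⟨j, hjk, hiff⟩ := exists_forall_dvd_x_zpow_iff a hk l
  rcases hjk.lt_or_eq with hjk | rfl
  · have := sq_lt_x_zpow_of_dvd hax hay hc (Nat.cast_nonneg j) (Nat.cast_lt.2 hjk)
      (by rw [zpow_natCast]; exact (hiff c hck).1 hcl) (by rwa [zpow_natCast])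
    rw [zpow_natCast] at this
    exact absurd hlt this.not_gt
  · exact (hiff _ dvd_rfl).2 dvd_rfl

theorem x_dvd_x_of_lt_sq {α β : Solution₁ d} (hα : 1 < α.x) {c : ℤ} (hc : 0 < c)
    (hcα : c ∣ α.x) (hcβ : c ∣ β.x) (hlt : α.x < c ^ 2) : α.x ∣ β.x := by
  obtain ⟨ε, hε⟩ := IsFundamental.exists_of_not_isSquare (d_pos_of_one_lt_x hα)
    (d_nonsquare_of_one_lt_x hα)
  obtain ⟨k, hk⟩ : ∃ k : ℕ, α.x = (ε ^ k).x := by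
    rcases le_total 0 α.y with hy | hy
    · obtain ⟨k, rfl⟩ := hε.eq_pow_of_nonneg (by linarith) hy
      exact ⟨k, rfl⟩
    · obtain ⟨k, hk⟩ := hε.eq_pow_of_nonneg (a := α⁻¹) (by rw [x_inv]; linarith)
        (by rw [y_inv]; linarith)
      exact ⟨k, by rw [← hk, x_inv]⟩
  have hdvd : ∀ l : ℤ, c ∣ (ε ^ l).x → α.x ∣ (ε ^ l).x := fun l hcl => by
    rw [hk] at hcα hlt ⊢
    exact x_pow_dvd_x_zpow_of_lt_sq hε.1 hε.2.1 hc hcα hcl hlt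
  obtain ⟨l, rfl | rfl⟩ := hε.eq_zpow_or_neg_zpow β
  · exact hdvd l hcβ
  · rw [x_neg, dvd_neg] at hcβ ⊢
    exact hdvd l hcβ

end Pell.Solution₁

theorem Pell.exists_solution₁_x_eq_of_mul_eq_sq {A B x : ℕ} (hA : 1 < A) (hB : 0 < B)
    (h : (A ^ 2 - 1) * (B ^ 2 - 1) = x ^ 2) :
    ∃ (D : ℤ) (α β : Pell.Solution₁ D), α.x = A ∧ β.x = B := by
  obtain ⟨D, u, v, -, hu, hv⟩ := Nat.exists_squarefree_mul_sq_of_mul_eq_sq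
    (by have := Nat.one_lt_pow two_ne_zero hA; omega) h
  zify [Nat.one_le_pow 2 A (by omega)] at hu
  zify [Nat.one_le_pow 2 B hB] at hv
  exact ⟨D, .mk A u (by linarith), .mk B v (by linarith), rfl, rfl⟩

theorem stmt_8_general (a b : ℕ) (ha : 1 < a) (hab : a < b) (hnab : ¬ a ∣ b)
    (hsq : (Nat.gcd a b) ^ 2 > a ∨ (Nat.gcd a b) ^ 2 > b) :
    ¬ ∃ (n x : ℕ), 0 < n ∧ 0 < x ∧ Even n ∧ (a ^ n - 1) * (b ^ n - 1) = x ^ 2 := by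
  rintro ⟨n, x, hn, -, ⟨m, rfl⟩, heq⟩
  have hm : m ≠ 0 := by omega
  obtain ⟨D, α, β, hαx, hβx⟩ := Pell.exists_solution₁_x_eq_of_mul_eq_sq (A := a ^ m) (B := b ^ m)
    (Nat.one_lt_pow hm ha) (pow_pos (by omega) m) (by rw [← heq, ← pow_mul, ← pow_mul, mul_two])
  have hlt : a ^ m < (Nat.gcd a b ^ m) ^ 2 := by
    rw [← pow_mul, mul_comm, pow_mul]
    exact Nat.pow_lt_pow_left (hsq.elim id hab.trans) hm
  have hdvd : α.x ∣ β.x := Pell.Solution₁.x_dvd_x_of_lt_sq (c := (a.gcd b ^ m : ℕ))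
    (by rw [hαx]; exact_mod_cast Nat.one_lt_pow hm ha) (by positivity)
    (by rw [hαx]; exact_mod_cast pow_dvd_pow_of_dvd (Nat.gcd_dvd_left a b) m)
    (by rw [hβx]; exact_mod_cast pow_dvd_pow_of_dvd (Nat.gcd_dvd_right a b) m)
    (by rw [hαx]; exact_mod_cast hlt)
  rw [hαx, hβx, Int.natCast_dvd_natCast, Nat.pow_dvd_pow_iff hm] at hdvd
  exact hnab hdvd

theorem stmt_8 (a b : ℕ) (ha : 1 < a) (hab : a < b) (hnab : ¬ a ∣ b) (hnba : ¬ b ∣ a)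
    (hg : 1 < Nat.gcd a b) (hsq : (Nat.gcd a b) ^ 2 > a ∨ (Nat.gcd a b) ^ 2 > b) :
    ¬ ∃ (n x : ℕ), 0 < n ∧ 0 < x ∧ Even n ∧ (a ^ n - 1) * (b ^ n - 1) = x ^ 2 :=
  stmt_8_general a b ha hab hnab hsq
end

section
/- Let a, b be integers with 1 < a < b such that a divides b and a > b/a. Then there are no positive integers n, x with n even such that (a^n - 1)(b^n - 1) = x^2. -/
/-!
Write `n = 2m`, `b = ac`, `U = a^m`, `W = c^m`, so that `2 ≤ W ≤ U` and the equation reads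
`(U² - 1)(U²W² - 1) = x²`. With `A = 2U²W² - W² - 1` this is equivalent to
`(A - 2Wx)(A + 2Wx) = (W² - 1)²`: a factorization of a positive number into two factors of
positive sum `2A`, hence into two positive integers, whose sum is then at most `(W² - 1)² + 1`.
But `U ≥ W` makes `2A` larger than that.
-/

theorem Int.not_isSquare_sq_sub_one_mul_sq_mul_sq_sub_one {U W : ℤ} (hW : 2 ≤ W) (hWU : W ≤ U) :
    ¬ IsSquare ((U ^ 2 - 1) * (U ^ 2 * W ^ 2 - 1)) := by
  rintro ⟨X, hX⟩
  set A := 2 * U ^ 2 * W ^ 2 - W ^ 2 - 1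
  have hfac : (A - 2 * W * X) * (A + 2 * W * X) = (W ^ 2 - 1) ^ 2 := by
    linear_combination (4 * W ^ 2) * hX
  have hW2U2 : W ^ 2 ≤ U ^ 2 := pow_le_pow_left₀ (by omega) hWU 2
  have hA : 0 < A := by nlinarith
  obtain ⟨hminus, hplus⟩ : 0 < A - 2 * W * X ∧ 0 < A + 2 * W * X := by
    have hprod : 0 < (A - 2 * W * X) * (A + 2 * W * X) := hfac ▸ pow_pos (by nlinarith) 2
    rcases pos_and_pos_or_neg_and_neg_of_mul_pos hprod with h | h
    · exact h
    · linarith [h.1, h.2]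
  have hsum : (A - 2 * W * X) + (A + 2 * W * X) ≤ (W ^ 2 - 1) ^ 2 + 1 := by
    nlinarith [mul_nonneg (by omega : 0 ≤ A - 2 * W * X - 1) (by omega : 0 ≤ A + 2 * W * X - 1)]
  nlinarith [mul_le_mul_of_nonneg_left hW2U2 (sq_nonneg W), pow_le_pow_left₀ (by omega) hW 2]

theorem Nat.not_isSquare_sq_sub_one_mul_sq_sub_one {U W : ℕ} (hW : 2 ≤ W) (hWU : W ≤ U) :
    ¬ IsSquare ((U ^ 2 - 1) * ((U * W) ^ 2 - 1)) := by
  rintro ⟨X, hX⟩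
  apply Int.not_isSquare_sq_sub_one_mul_sq_mul_sq_sub_one (U := U) (W := W) (by omega) (by omega)
  refine ⟨X, ?_⟩
  have hU : 1 ≤ U ^ 2 := Nat.one_le_pow _ _ (by omega)
  have hUW : 1 ≤ (U * W) ^ 2 := Nat.one_le_pow _ _ (Nat.mul_pos (by omega) (by omega))
  have := congrArg ((↑) : ℕ → ℤ) hX
  push_cast [Nat.cast_sub hU, Nat.cast_sub hUW] at this
  linear_combination this

theorem stmt_9 (a b : ℕ) (ha : 1 < a) (hab : a < b) (hdvd : a ∣ b) (hba : b / a < a) :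
    ¬ ∃ (n x : ℕ), 0 < n ∧ 0 < x ∧ Even n ∧ (a ^ n - 1) * (b ^ n - 1) = x ^ 2 := by
  rintro ⟨n, x, hn, -, ⟨m, rfl⟩, heq⟩
  obtain ⟨c, rfl⟩ := hdvd
  have hc : 1 < c := by nlinarith
  rw [Nat.mul_div_cancel_left c (by omega)] at hba
  have hm : m ≠ 0 := by omega
  refine Nat.not_isSquare_sq_sub_one_mul_sq_sub_one (U := a ^ m) (W := c ^ m)
    (Nat.one_lt_pow hm hc) (Nat.pow_le_pow_left hba.le m) ⟨x, ?_⟩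
  rw [← pow_mul, ← mul_pow, ← pow_mul, mul_two, heq, sq]
end

section
/- Let a, b be odd integers with 1 < a < b and g = gcd(a,b) > 1. If a/g ≡ 3 (mod 4) or b/g ≡ 3 (mod 4), then there are no positive integers n, x with n ≡ 2 (mod 4) such that (a^n - 1)(b^n - 1) = x^2. -/
/-!
Write n = 2m with m odd and put A = a^m, B = b^m. Splitting off D = gcd(A² - 1, B² - 1), the
equation forces A² - 1 = D s² and B² - 1 = D t², so A and B are x-coordinates X_j, X_k of powers
of the fundamental solution of X² - D Y² = 1. For M = gcd(A, B) = g^m > 1 the indices i with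
M ∣ X_i are exactly the odd multiples of the least such index r, and X_{rq} = X_r w with
w ≡ 1 (mod 4) for odd q. Then X_r divides gcd(A, B) = M, so X_r = M and
(a/g)^m = A/M ≡ 1 (mod 4), likewise for b; but c ≡ 3 (mod 4) gives c^m ≡ 3 (mod 4) for odd m.
-/

theorem Nat.exists_mul_sq_of_mul_eq_sq {P Q x : ℕ} (h : P * Q = x ^ 2) :
    ∃ D s t, P = D * s ^ 2 ∧ Q = D * t ^ 2 := by
  obtain ⟨P', Q', hcop, hP, hQ⟩ := Nat.exists_coprime P Q
  set D := Nat.gcd P Q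
  rcases Nat.eq_zero_or_pos D with hD | hD
  · exact ⟨0, 0, 0, by simp [hP, hD], by simp [hQ, hD]⟩
  obtain ⟨y, rfl⟩ : D ∣ x := by
    rw [← Nat.pow_dvd_pow_iff two_ne_zero, ← h, hP, hQ]
    exact ⟨P' * Q', by ring⟩
  have hPQ : P' * Q' = y ^ 2 := by
    apply Nat.eq_of_mul_eq_mul_left (pow_pos hD 2)
    rw [← mul_pow, ← h, hP, hQ]
    ring
  obtain ⟨s, hs⟩ := exists_eq_pow_of_mul_eq_pow (Nat.isUnit_iff.mpr hcop) hPQ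
  obtain ⟨t, ht⟩ :=
    exists_eq_pow_of_mul_eq_pow (Nat.isUnit_iff.mpr hcop.symm) ((mul_comm _ _).trans hPQ)
  exact ⟨D, s, t, by rw [hP, hs, mul_comm], by rw [hQ, ht, mul_comm]⟩

namespace Pell.Solution₁

variable {d : ℤ} (a : Solution₁ d)

theorem x_pow_two_mul (n : ℕ) : (a ^ (2 * n)).x = 2 * (a ^ n).x ^ 2 - 1 := by
  rw [two_mul, pow_add, x_mul]
  linear_combination -(a ^ n).prop

theorem x_pow_add_two_mul_add_x_pow (u r : ℕ) :
    (a ^ (u + 2 * r)).x + (a ^ u).x = 2 * (a ^ r).x * (a ^ (u + r)).x := by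
  simp only [pow_add, two_mul, x_mul, y_mul]
  linear_combination (-(a ^ u).x) * (a ^ r).prop

theorem exists_x_pow_two_mul_add_one_eq_mul (l : ℕ) :
    ∃ w, (a ^ (2 * l + 1)).x = a.x * w ∧ w ≡ 1 [ZMOD 4] := by
  induction l with
  | zero => exact ⟨1, by simp, rfl⟩
  | succ l ih =>
    obtain ⟨w, hw, hw4⟩ := ih
    refine ⟨2 * (a ^ (2 * (l + 1))).x - w, ?_, ?_⟩
    · have h := x_pow_add_two_mul_add_x_pow a (2 * l + 1) 1
      rw [show 2 * l + 1 + 2 * 1 = 2 * (l + 1) + 1 by ring, show 2 * l + 1 + 1 = 2 * (l + 1) by ring,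
        pow_one, hw] at h
      linear_combination h
    · -- `X_{2(l+1)}` is odd, so `2 X_{2(l+1)} ≡ 2 [ZMOD 4]`
      rw [x_pow_two_mul]
      generalize (a ^ (l + 1)).x ^ 2 = t
      unfold Int.ModEq at *
      omega

theorem dvd_x_pow_add_two_mul_iff {M : ℤ} {r : ℕ} (hr : M ∣ (a ^ r).x) (u : ℕ) :
    M ∣ (a ^ (u + 2 * r)).x ↔ M ∣ (a ^ u).x := by
  have h : M ∣ (a ^ (u + 2 * r)).x + (a ^ u).x := by
    rw [x_pow_add_two_mul_add_x_pow]
    exact (hr.mul_left 2).mul_right _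
  exact ⟨fun h' => (dvd_add_right h').mp h, fun h' => (dvd_add_left h').mp h⟩

theorem exists_odd_mul_of_dvd_x_pow {M : ℤ} (hM : ¬IsUnit M) {r : ℕ} (hr : M ∣ (a ^ r).x)
    (hmin : ∀ i < r, ¬M ∣ (a ^ i).x) {i : ℕ} (hi : M ∣ (a ^ i).x) : ∃ q, Odd q ∧ i = r * q := by
  have hr0 : r ≠ 0 := by
    rintro rfl
    rw [pow_zero, x_one, ← isUnit_iff_dvd_one] at hr
    exact hM hr
  induction i using Nat.strong_induction_on with
  | _ i ih =>
  rcases lt_trichotomy i r with hlt | rfl | hgt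
  · exact absurd hi (hmin i hlt)
  · exact ⟨1, odd_one, (mul_one i).symm⟩
  rcases lt_or_ge i (2 * r) with hlt | hge
  · have hreflect : M ∣ (a ^ (2 * r - i)).x := by
      rw [← dvd_x_pow_add_two_mul_iff a hi, show 2 * r - i + 2 * i = i + 2 * r by omega,
        dvd_x_pow_add_two_mul_iff a hr]
      exact hi
    exact absurd hreflect (hmin _ (by omega))
  · obtain ⟨q, hq, he⟩ := ih (i - 2 * r) (by omega)
      (by rwa [← dvd_x_pow_add_two_mul_iff a hr, Nat.sub_add_cancel hge])
    exact ⟨q + 2, hq.add_even even_two, by rw [mul_add, ← he]; omega⟩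

theorem exists_forall_dvd_x_pow_eq_mul {M : ℤ} (hM : ¬IsUnit M) {j : ℕ} (hj : M ∣ (a ^ j).x) :
    ∃ r, M ∣ (a ^ r).x ∧
      ∀ i, M ∣ (a ^ i).x → ∃ w, (a ^ i).x = (a ^ r).x * w ∧ w ≡ 1 [ZMOD 4] := by
  classical
  have hex : ∃ r, M ∣ (a ^ r).x := ⟨j, hj⟩
  refine ⟨Nat.find hex, Nat.find_spec hex, fun i hi => ?_⟩
  obtain ⟨_, ⟨l, rfl⟩, rfl⟩ :=
    exists_odd_mul_of_dvd_x_pow a hM (Nat.find_spec hex) (fun _ => Nat.find_min hex) hi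
  rw [pow_mul]
  exact exists_x_pow_two_mul_add_one_eq_mul _ l

theorem exists_isFundamental_x_pow_eq {A B s t : ℤ} (hA : 1 < A) (hB : 0 < B)
    (hAs : A ^ 2 - d * s ^ 2 = 1) (hBt : B ^ 2 - d * t ^ 2 = 1) :
    ∃ ε : Solution₁ d, IsFundamental ε ∧ ∃ j k : ℕ, (ε ^ j).x = A ∧ (ε ^ k).x = B := by
  let α : Solution₁ d := mk A |s| (by rwa [sq_abs])
  let β : Solution₁ d := mk B |t| (by rwa [sq_abs])
  have hα : 1 < α.x := hA
  obtain ⟨ε, hε⟩ :=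
    IsFundamental.exists_of_not_isSquare (d_pos_of_one_lt_x hα) (d_nonsquare_of_one_lt_x hα)
  obtain ⟨j, hj⟩ := hε.eq_pow_of_nonneg (a := α) (zero_lt_one.trans hA) (abs_nonneg s)
  obtain ⟨k, hk⟩ := hε.eq_pow_of_nonneg (a := β) hB (abs_nonneg t)
  exact ⟨ε, hε, j, k, by rw [← hj]; rfl, by rw [← hk]; rfl⟩

end Pell.Solution₁

open Pell.Solution₁ in
theorem div_gcd_mod_four_eq_one_of_mul_eq_sq {A B x : ℕ} (hx : x ≠ 0)
    (h : (A ^ 2 - 1) * (B ^ 2 - 1) = x ^ 2) (hAB : 1 < Nat.gcd A B) :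
    A / Nat.gcd A B % 4 = 1 ∧ B / Nat.gcd A B % 4 = 1 := by
  obtain ⟨D, s, t, hAs, hBt⟩ := Nat.exists_mul_sq_of_mul_eq_sq h
  obtain ⟨hA, hB⟩ := mul_ne_zero_iff.mp (h ▸ pow_ne_zero 2 hx)
  have hA1 : 1 < A := by
    by_contra!
    interval_cases A <;> simp at hA
  have hB1 : 1 < B := by
    by_contra!
    interval_cases B <;> simp at hB
  zify [Nat.one_le_pow _ _ (zero_lt_one.trans hA1), Nat.one_le_pow _ _ (zero_lt_one.trans hB1)]
    at hAs hBt
  obtain ⟨ε, hε, j, k, hj, hk⟩ := exists_isFundamental_x_pow_eq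
    (by exact_mod_cast hA1 : 1 < (A : ℤ)) (by positivity : 0 < (B : ℤ))
    (by linear_combination hAs : (A : ℤ) ^ 2 - D * s ^ 2 = 1)
    (by linear_combination hBt : (B : ℤ) ^ 2 - D * t ^ 2 = 1)
  set M : ℤ := ↑(Nat.gcd A B) with hM_def
  have hM : ¬IsUnit M := by rw [Int.isUnit_iff]; omega
  have hMj : M ∣ (ε ^ j).x := hj ▸ Int.natCast_dvd_natCast.mpr (Nat.gcd_dvd_left A B)
  have hMk : M ∣ (ε ^ k).x := hk ▸ Int.natCast_dvd_natCast.mpr (Nat.gcd_dvd_right A B)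
  obtain ⟨r, hMr, hmul⟩ := ε.exists_forall_dvd_x_pow_eq_mul hM hMj
  obtain ⟨w, hw, hw4⟩ := hmul j hMj
  obtain ⟨w', hw', hw4'⟩ := hmul k hMk
  have hrM : (ε ^ r).x = M := by
    refine Int.dvd_antisymm (x_pow_pos hε.x_pos r).le (Nat.cast_nonneg _) ?_ hMr
    rw [hM_def, ← Int.gcd_natCast_natCast, ← hj, ← hk]
    exact Int.dvd_coe_gcd (Dvd.intro w hw.symm) (Dvd.intro w' hw'.symm)
  have hdiv : ∀ C : ℕ, ∀ w : ℤ, (C : ℤ) = M * w → w ≡ 1 [ZMOD 4] → C / Nat.gcd A B % 4 = 1 := by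
    intro C w hC hw4
    have hcast : ((C / Nat.gcd A B : ℕ) : ℤ) = w := by
      rw [Int.natCast_div, ← Int.eq_ediv_of_mul_eq_right (by omega) hC.symm]
    unfold Int.ModEq at hw4
    omega
  exact ⟨hdiv A w (by rw [← hj, hw, hrM]) hw4, hdiv B w' (by rw [← hk, hw', hrM]) hw4'⟩

theorem Nat.pow_mod_four_eq_three {c m : ℕ} (hc : c % 4 = 3) (hm : Odd m) : c ^ m % 4 = 3 := by
  obtain ⟨k, rfl⟩ := hm
  rw [Nat.pow_mod, hc, pow_succ, pow_mul, Nat.mul_mod, Nat.pow_mod]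
  norm_num

theorem stmt_10_general (a b : ℕ) (hg : 1 < Nat.gcd a b)
    (hmod : a / Nat.gcd a b % 4 = 3 ∨ b / Nat.gcd a b % 4 = 3) :
    ¬ ∃ (n x : ℕ), 0 < n ∧ 0 < x ∧ n % 4 = 2 ∧ (a ^ n - 1) * (b ^ n - 1) = x ^ 2 := by
  rintro ⟨n, x, -, hx, hn, h⟩
  obtain ⟨m, hm, rfl⟩ : ∃ m, Odd m ∧ n = 2 * m := ⟨n / 2, ⟨n / 4, by omega⟩, by omega⟩
  simp only [mul_comm 2 m, pow_mul] at h
  have hgm : 1 < Nat.gcd (a ^ m) (b ^ m) := by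
    rw [Nat.pow_gcd_pow]
    exact Nat.one_lt_pow hm.pos.ne' hg
  obtain ⟨ha, hb⟩ := div_gcd_mod_four_eq_one_of_mul_eq_sq hx.ne' h hgm
  rw [Nat.pow_gcd_pow, ← Nat.div_pow (Nat.gcd_dvd_left a b)] at ha
  rw [Nat.pow_gcd_pow, ← Nat.div_pow (Nat.gcd_dvd_right a b)] at hb
  rcases hmod with h3 | h3
  · exact absurd ha (by rw [Nat.pow_mod_four_eq_three h3 hm]; decide)
  · exact absurd hb (by rw [Nat.pow_mod_four_eq_three h3 hm]; decide)

theorem stmt_10 (a b : ℕ) (ha : 1 < a) (hab : a < b) (hoa : Odd a) (hob : Odd b)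
    (hg : 1 < Nat.gcd a b)
    (hmod : a / Nat.gcd a b % 4 = 3 ∨ b / Nat.gcd a b % 4 = 3) :
    ¬ ∃ (n x : ℕ), 0 < n ∧ 0 < x ∧ n % 4 = 2 ∧ (a ^ n - 1) * (b ^ n - 1) = x ^ 2 :=
  stmt_10_general a b hg hmod
end

section
/- For the Lucas sequence V_n(P, -1) defined by V_0 = 2, V_1 = P, V_{n+1} = P·V_n - V_{n-1}: 5 divides V_n(P,-1) if and only if 5 divides P and n is odd. -/
/-!
Reduce modulo 5. If `5 ∣ P` the recurrence becomes `V (n + 2) ≡ -V n`, so the terms alternate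
between `±2` at even indices and `0` at odd ones. Otherwise the quadratic form
`V (n + 1) ^ 2 - P V (n + 1) V n + V n ^ 2` is the invariant `4 - P ^ 2`, so a zero term
`V n ≡ 0` forces `V (n + 1) ^ 2 ≡ 4 - P ^ 2`; modulo 5 this is impossible for `P ≡ ±1` and forces
`V (n + 1) ≡ 0` for `P ≡ ±2`. Two consecutive zeros propagate back to `V 0 = 2`, a contradiction.
-/

/-- Lucas sequence of the second kind with parameters `(P, -1)`. -/
def lucasV (P : ℤ) : ℕ → ℤ
  | 0 => 2
  | 1 => P
  | n + 2 => P * lucasV P (n + 1) - lucasV P n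

theorem lucasV_succ_sq_sub_mul_add_sq (P : ℤ) (n : ℕ) :
    lucasV P (n + 1) ^ 2 - P * lucasV P (n + 1) * lucasV P n + lucasV P n ^ 2 = 4 - P ^ 2 := by
  induction n with
  | zero => simp only [lucasV]; ring
  | succ n ih =>
    rw [lucasV]
    linear_combination ih

section Cast

variable {R : Type*} [CommRing R] (P : ℤ)

theorem cast_lucasV_add_two (n : ℕ) :
    (lucasV P (n + 2) : R) = P * lucasV P (n + 1) - lucasV P n := by
  simp [lucasV]

theorem cast_lucasV_eq_zero_iff_odd (hP : (P : R) = 0) (h2 : (2 : R) ≠ 0) (n : ℕ) :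
    (lucasV P n : R) = 0 ↔ Odd n := by
  induction n using Nat.twoStepInduction with
  | zero => simpa [lucasV] using h2
  | one => simpa [lucasV] using hP
  | more n ih _ =>
    rw [cast_lucasV_add_two, hP, zero_mul, zero_sub, neg_eq_zero, ih]
    grind

theorem two_eq_zero_of_cast_lucasV_eq_zero_of_succ {n : ℕ} (hn : (lucasV P n : R) = 0)
    (hn' : (lucasV P (n + 1) : R) = 0) : (2 : R) = 0 := by
  induction n with
  | zero => simpa [lucasV] using hn
  | succ n ih =>
    refine ih ?_ hn
    rw [cast_lucasV_add_two, hn] at hn'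
    simpa using hn'

end Cast

theorem cast_lucasV_ne_zero_mod_five {P : ℤ} (hP : (P : ZMod 5) ≠ 0) (n : ℕ) :
    (lucasV P n : ZMod 5) ≠ 0 := by
  intro hn
  have hsq : (lucasV P (n + 1) : ZMod 5) ^ 2 = 4 - (P : ZMod 5) ^ 2 := by
    have := congrArg (Int.cast : ℤ → ZMod 5) (lucasV_succ_sq_sub_mul_add_sq P n)
    push_cast at this
    rw [hn] at this
    linear_combination this
  have hsucc : (lucasV P (n + 1) : ZMod 5) = 0 := by
    have key : ∀ p x : ZMod 5, p ≠ 0 → x ^ 2 = 4 - p ^ 2 → x = 0 := by decide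
    exact key _ _ hP hsq
  exact absurd (two_eq_zero_of_cast_lucasV_eq_zero_of_succ P hn hsucc) (by decide)

theorem stmt_13_general (P : ℤ) (n : ℕ) :
    (5 : ℤ) ∣ lucasV P n ↔ (5 : ℤ) ∣ P ∧ Odd n := by
  rw [← Nat.cast_ofNat, ← ZMod.intCast_zmod_eq_zero_iff_dvd, ← ZMod.intCast_zmod_eq_zero_iff_dvd]
  by_cases hP : (P : ZMod 5) = 0
  · simp [hP, cast_lucasV_eq_zero_iff_odd P hP (by decide)]
  · simp [hP, cast_lucasV_ne_zero_mod_five hP]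

theorem stmt_13 (P : ℤ) (hP : P ≠ 0) (hdisc : P ^ 2 - 4 > 0) (n : ℕ) :
    (5 : ℤ) ∣ lucasV P n ↔ (5 : ℤ) ∣ P ∧ Odd n :=
  stmt_13_general P n
end

section
/- Let P be an even nonzero integer with P² - 4 > 0. Then the 2-adic valuation of V_n(P,-1) equals ν₂(P) if n is odd, and equals 1 if n is even, where V_n(P,-1) is the Lucas sequence of the second kind: V_0 = 2, V_1 = P, V_{n+1} = P·V_n - V_{n-1}. -/
lemma padicValInt_mul_of_not_dvd {p : ℕ} [Fact p.Prime] (a : ℤ) {u : ℤ} (hu : ¬(p : ℤ) ∣ u) :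
    padicValInt p (a * u) = padicValInt p a := by
  rcases eq_or_ne a 0 with rfl | ha
  · simp
  · rw [padicValInt.mul ha (by rintro rfl; exact hu (dvd_zero _)),
      padicValInt.eq_zero_of_not_dvd hu, add_zero]

lemma padicValInt_two_mul_of_odd (a : ℤ) {u : ℤ} (hu : Odd u) :
    padicValInt 2 (a * u) = padicValInt 2 a :=
  padicValInt_mul_of_not_dvd a (by rwa [Nat.cast_ofNat, ← even_iff_two_dvd, Int.not_even_iff_odd])

lemma lucasV_add_two (P : ℤ) (n : ℕ) :
    lucasV P (n + 2) = P * lucasV P (n + 1) - lucasV P n := rfl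

lemma lucasV_eq_two_mul_odd_and_eq_mul_odd {P : ℤ} (hP : Even P) (k : ℕ) :
    (∃ u, Odd u ∧ lucasV P (2 * k) = 2 * u) ∧ (∃ u, Odd u ∧ lucasV P (2 * k + 1) = P * u) := by
  obtain ⟨m, rfl⟩ := hP
  induction k with
  | zero => exact ⟨⟨1, odd_one, rfl⟩, ⟨1, odd_one, (mul_one _).symm⟩⟩
  | succ k ih =>
    obtain ⟨⟨v, hv, hv_eq⟩, ⟨u, hu, hu_eq⟩⟩ := ih
    have h_even : lucasV (m + m) (2 * (k + 1)) = 2 * (2 * m ^ 2 * u - v) := by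
      rw [show 2 * (k + 1) = 2 * k + 2 by ring, lucasV_add_two, hv_eq, hu_eq]; ring
    have h_even_odd : Odd (2 * m ^ 2 * u - v) := by
      rw [Int.odd_sub']; exact iff_of_true hv (by simp [mul_assoc])
    refine ⟨⟨_, h_even_odd, h_even⟩, ⟨2 * (2 * m ^ 2 * u - v) - u, ?_, ?_⟩⟩
    · rw [Int.odd_sub']; exact iff_of_true hu (by simp)
    · rw [show 2 * (k + 1) + 1 = 2 * k + 1 + 2 by ring, lucasV_add_two, ← mul_add_one 2 k,
        h_even, hu_eq]; ring

theorem stmt_14_general (P : ℤ) (hPe : Even P) (n : ℕ) :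
    padicValInt 2 (lucasV P n) = if Odd n then padicValInt 2 P else 1 := by
  obtain ⟨k, rfl | rfl⟩ := n.even_or_odd'
  · obtain ⟨u, hu, h⟩ := (lucasV_eq_two_mul_odd_and_eq_mul_odd hPe k).1
    rw [if_neg (Nat.not_odd_iff_even.mpr (even_two_mul k)), h,
      padicValInt_two_mul_of_odd _ hu]
    exact padicValInt.self one_lt_two
  · obtain ⟨u, hu, h⟩ := (lucasV_eq_two_mul_odd_and_eq_mul_odd hPe k).2
    rw [if_pos (odd_two_mul_add_one k), h,
      padicValInt_two_mul_of_odd _ hu]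

theorem stmt_14 (P : ℤ) (hP : P ≠ 0) (hPe : Even P) (hdisc : P ^ 2 - 4 > 0) (n : ℕ) :
    padicValInt 2 (lucasV P n) = if Odd n then padicValInt 2 P else 1 :=
  stmt_14_general P hPe n
end
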